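/- arXiv:2107.04322 — 5 statements merged into one kernel-verified Lean document; each statement's English description precedes it below -/
import Mathlib

section
/- For any simple graph G with m edges, Σ_{uv∈E(G)} e(G−{u,v})² = m³ + F(G) − 2m·M₁(G) + 2M₂(G) + 2m² − 2M₁(G) + m, where F(G) = Σ_v deg(v)³ is the forgotten index and M₂(G) = Σ_{uv∈E} deg(u)deg(v) is the second Zagreb index. -/
open Finset

namespace PaperMatching

open scoped Classical

variable {V : Type*}

/-- The number of `k`-matchings of `G`: sets of `k` pairwise vertex-disjoint edges. -/
noncomputable def pM (G : SimpleGraph V) [Fintype V] (k : ℕ) : ℕ :=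
  ((G.edgeFinset.powersetCard k).filter
    (fun s => ∀ e ∈ s, ∀ f ∈ s, e ≠ f → ∀ v : V, ¬(v ∈ e ∧ v ∈ f))).card

/-- First general Zagreb index `∑ deg(v)^k`. -/
noncomputable def M1gen (G : SimpleGraph V) [Fintype V] (k : ℕ) : ℕ :=
  ∑ v : V, (G.degree v) ^ k

/-- First Zagreb index. -/
noncomputable def M1 (G : SimpleGraph V) [Fintype V] : ℕ := M1gen G 2

/-- Forgotten index. -/
noncomputable def Fidx (G : SimpleGraph V) [Fintype V] : ℕ := M1gen G 3

/-- Second Zagreb index `∑_{uv ∈ E} deg(u) deg(v)`. -/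
noncomputable def M2 (G : SimpleGraph V) [Fintype V] : ℕ :=
  ∑ e ∈ G.edgeFinset,
    Sym2.lift ⟨fun u v => G.degree u * G.degree v, fun u v => by ring⟩ e

/-- `α(G) = ∑_{uv ∈ E} deg(u) deg(v) (deg(u) + deg(v))`. -/
noncomputable def alphaI (G : SimpleGraph V) [Fintype V] : ℕ :=
  ∑ e ∈ G.edgeFinset,
    Sym2.lift ⟨fun u v => G.degree u * G.degree v * (G.degree u + G.degree v),
      fun u v => by ring⟩ e

/-- `α₂(G) = ∑_{uv ∈ E} deg(u) deg(v) (deg(u)² + deg(v)²)`. -/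
noncomputable def alpha2 (G : SimpleGraph V) [Fintype V] : ℕ :=
  ∑ e ∈ G.edgeFinset,
    Sym2.lift ⟨fun u v => G.degree u * G.degree v * (G.degree u ^ 2 + G.degree v ^ 2),
      fun u v => by ring⟩ e

/-- Sum of the degrees of the two endpoints of an edge. -/
noncomputable def degSum (G : SimpleGraph V) [Fintype V] (e : Sym2 V) : ℕ :=
  Sym2.lift ⟨fun u v => G.degree u + G.degree v, fun u v => by ring⟩ e

/-- Edge degree `deg(e) = deg(u) + deg(v) - 2` for `e = uv`, as a rational number. -/
noncomputable def degE (G : SimpleGraph V) [Fintype V] (e : Sym2 V) : ℚ :=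
  (degSum G e : ℚ) - 2

/-- Ordered pairs of distinct incident edges. -/
noncomputable def incPairs (G : SimpleGraph V) [Fintype V] : Finset (Sym2 V × Sym2 V) :=
  (G.edgeFinset ×ˢ G.edgeFinset).filter (fun p => p.1 ≠ p.2 ∧ ∃ v : V, v ∈ p.1 ∧ v ∈ p.2)

/-- First reformulated Zagreb index `EM₁(G) = ∑_e deg(e)²`. -/
noncomputable def EM1 (G : SimpleGraph V) [Fintype V] : ℚ :=
  ∑ e ∈ G.edgeFinset, (degE G e) ^ 2

/-- Second reformulated Zagreb index `EM₂(G) = ∑_{e ∼ f} deg(e) deg(f)`, the sum being over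
unordered pairs of distinct incident edges (encoded as half the sum over ordered pairs). -/
noncomputable def EM2 (G : SimpleGraph V) [Fintype V] : ℚ :=
  (∑ p ∈ incPairs G, degE G p.1 * degE G p.2) / 2

/-- `β(G) = ∑_{e ∼ f} deg(e ∩ f) (deg(e) + deg(f))` over unordered pairs of distinct incident
edges, where `e ∩ f` is the common vertex (encoded as half the sum over ordered pairs, the inner
sum running over the unique common vertex). -/
noncomputable def betaI (G : SimpleGraph V) [Fintype V] : ℚ :=
  (∑ p ∈ incPairs G, ∑ v ∈ univ.filter (fun v : V => v ∈ p.1 ∧ v ∈ p.2),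
      (G.degree v : ℚ) * (degE G p.1 + degE G p.2)) / 2

/-- `γ(G) = ∑ deg(v)(deg(x)+deg(y))` over pairs of a vertex `v` and an edge `xy` with
`v ∉ {x,y}` and `v` adjacent to an endpoint of `xy`. -/
noncomputable def gammaI (G : SimpleGraph V) [Fintype V] : ℕ :=
  ∑ v : V, ∑ e ∈ G.edgeFinset,
    if v ∉ e ∧ ∃ w ∈ e, G.Adj v w then G.degree v * degSum G e else 0

/-- The graph obtained from `G` by deleting both endpoints of the edge `e` (kept on the same
vertex type; the deleted vertices become isolated). -/
def edel (G : SimpleGraph V) (e : Sym2 V) : SimpleGraph V where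
  Adj a b := G.Adj a b ∧ a ∉ e ∧ b ∉ e
  symm := ⟨fun a b ⟨h, ha, hb⟩ => ⟨h.symm, hb, ha⟩⟩
  loopless := ⟨fun a ⟨h, _, _⟩ => G.loopless.irrefl a h⟩

/-- The star graph on `n` vertices: vertex `0` is adjacent to all others. -/
def starGraph (n : ℕ) : SimpleGraph (Fin n) where
  Adj a b := a ≠ b ∧ (a.val = 0 ∨ b.val = 0)
  symm := ⟨fun a b ⟨h, h0⟩ => ⟨h.symm, h0.symm⟩⟩
  loopless := ⟨fun a ⟨h, _⟩ => h rfl⟩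


lemma sum_edge_pair (G : SimpleGraph V) [Fintype V] (g : V → ℚ) :
    ∑ e ∈ G.edgeFinset, Sym2.lift ⟨fun u v => g u + g v, fun u v => by ring⟩ e
      = ∑ v : V, (G.degree v : ℚ) * g v := by
  classical
  set s : Finset (V × V) := (univ ×ˢ univ).filter (fun p : V × V => G.Adj p.1 p.2) with hs
  have hmaps : ∀ p ∈ s, Sym2.mk p.1 p.2 ∈ G.edgeFinset := by
    intro p hp
    simp only [hs, mem_filter] at hp
    simpa [SimpleGraph.mem_edgeFinset] using hp.2
  have key : ∑ e ∈ G.edgeFinset, ∑ p ∈ s.filter (fun p => Sym2.mk p.1 p.2 = e),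
      ((g p.1 + g p.2) / 2) = ∑ p ∈ s, ((g p.1 + g p.2) / 2) :=
    Finset.sum_fiberwise_of_maps_to hmaps _
  have fib : ∀ e ∈ G.edgeFinset, ∑ p ∈ s.filter (fun p => Sym2.mk p.1 p.2 = e),
      ((g p.1 + g p.2) / 2) = Sym2.lift ⟨fun u v => g u + g v, fun u v => by ring⟩ e := by
    intro e he
    induction e with
    | _ u v =>
      rw [SimpleGraph.mem_edgeFinset, SimpleGraph.mem_edgeSet] at he
      have huv : u ≠ v := he.ne
      have : s.filter (fun p => Sym2.mk p.1 p.2 = s(u, v)) = {(u, v), (v, u)} := by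
        ext ⟨a, b⟩
        simp only [hs, mem_filter, mem_product, mem_univ, true_and, mem_insert,
          mem_singleton, Prod.mk.injEq, Sym2.eq, Sym2.rel_iff', Prod.swap_prod_mk]
        constructor
        · rintro ⟨_, h | h⟩
          · left; exact ⟨h.1, h.2⟩
          · right; exact ⟨h.1, h.2⟩
        · rintro (⟨rfl, rfl⟩ | ⟨rfl, rfl⟩)
          · exact ⟨he, Or.inl ⟨rfl, rfl⟩⟩
          · exact ⟨he.symm, Or.inr ⟨rfl, rfl⟩⟩
      rw [this, Finset.sum_pair (by simp [huv])]
      simp only [Sym2.lift_mk]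
      ring
  rw [Finset.sum_congr rfl fib] at key
  rw [key]
  have hsplit : ∑ p ∈ s, ((g p.1 + g p.2) / 2)
      = ∑ u : V, ∑ v ∈ G.neighborFinset u, ((g u + g v) / 2) := by
    rw [hs, Finset.sum_filter, Finset.sum_product]
    refine Finset.sum_congr rfl fun u _ => ?_
    rw [SimpleGraph.neighborFinset_eq_filter, Finset.sum_filter]
  rw [hsplit]
  have hswap : ∑ u : V, ∑ v ∈ G.neighborFinset u, g v = ∑ v : V, (G.degree v : ℚ) * g v := by
    simp only [SimpleGraph.neighborFinset_eq_filter, Finset.sum_filter]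
    rw [Finset.sum_comm]
    refine Finset.sum_congr rfl fun v _ => ?_
    rw [← Finset.sum_filter]
    have hf : univ.filter (fun u => G.Adj u v) = G.neighborFinset v := by
      rw [SimpleGraph.neighborFinset_eq_filter]
      exact Finset.filter_congr fun u _ => by rw [SimpleGraph.adj_comm]
    rw [hf, Finset.sum_const, SimpleGraph.card_neighborFinset_eq_degree]
    simp [mul_comm]
  calc ∑ u : V, ∑ v ∈ G.neighborFinset u, ((g u + g v) / 2)
      = ((∑ u : V, (G.degree u : ℚ) * g u) + ∑ u : V, ∑ v ∈ G.neighborFinset u, g v) / 2 := by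
        rw [← Finset.sum_add_distrib, Finset.sum_div]
        refine Finset.sum_congr rfl fun u _ => ?_
        rw [← Finset.sum_div]
        congr 1
        rw [Finset.sum_add_distrib, Finset.sum_const, SimpleGraph.card_neighborFinset_eq_degree,
          nsmul_eq_mul]
    _ = ∑ v : V, (G.degree v : ℚ) * g v := by rw [hswap]; ring
lemma degSum_def (G : SimpleGraph V) [Fintype V] (u v : V) :
    degSum G s(u, v) = G.degree u + G.degree v := rfl

lemma card_edel (G : SimpleGraph V) [Fintype V] {e : Sym2 V} (he : e ∈ G.edgeFinset) :
    ((edel G e).edgeFinset.card : ℚ) = (G.edgeFinset.card : ℚ) + 1 - (degSum G e : ℚ) := by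
  classical
  induction e with
  | _ u v =>
    rw [SimpleGraph.mem_edgeFinset, SimpleGraph.mem_edgeSet] at he
    have huv : u ≠ v := he.ne
    have hset : (edel G s(u, v)).edgeFinset
        = G.edgeFinset \ (G.incidenceFinset u ∪ G.incidenceFinset v) := by
      ext f
      induction f with
      | _ a b =>
        rw [SimpleGraph.mem_edgeFinset]
        simp only [SimpleGraph.mem_edgeFinset, SimpleGraph.mem_edgeSet, edel,
          Finset.mem_sdiff, Finset.mem_union, SimpleGraph.mem_incidenceFinset,
          SimpleGraph.incidenceSet, Set.mem_setOf_eq, Set.mem_sep_iff, Sym2.mem_iff]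
        have hab : G.Adj a b → G.Adj a b := id
        constructor
        · rintro ⟨h, ha, hb⟩
          push_neg at ha hb
          exact ⟨h, by tauto⟩
        · rintro ⟨h, hn⟩
          push_neg at hn
          refine ⟨h, ?_, ?_⟩ <;> push_neg <;> tauto
    have hsub : G.incidenceFinset u ∪ G.incidenceFinset v ⊆ G.edgeFinset := by
      refine Finset.union_subset ?_ ?_ <;> intro f hf <;>
        rw [SimpleGraph.mem_incidenceFinset] at hf <;>
        exact SimpleGraph.mem_edgeFinset.2 hf.1
    have hinter : G.incidenceFinset u ∩ G.incidenceFinset v = {s(u, v)} := by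
      ext f
      simp only [Finset.mem_inter, SimpleGraph.mem_incidenceFinset,
        SimpleGraph.incidenceSet, Set.mem_toFinset, Set.mem_setOf_eq, Finset.mem_singleton]
      constructor
      · rintro ⟨⟨hf, hu⟩, ⟨-, hv⟩⟩
        exact (Sym2.mem_and_mem_iff huv).1 ⟨hu, hv⟩
      · rintro rfl
        exact ⟨⟨he, by simp⟩, ⟨he, by simp⟩⟩
    have hcu : (G.incidenceFinset u ∪ G.incidenceFinset v).card + 1
        = G.degree u + G.degree v := by
      have := Finset.card_union_add_card_inter (G.incidenceFinset u) (G.incidenceFinset v)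
      rw [hinter, Finset.card_singleton, SimpleGraph.card_incidenceFinset_eq_degree,
        SimpleGraph.card_incidenceFinset_eq_degree] at this
      exact this
    have hcard := Finset.card_sdiff_of_subset hsub
    have hle := Finset.card_le_card hsub
    rw [hset, hcard]
    rw [degSum_def]
    push_cast [Nat.cast_sub hle]
    have : ((G.incidenceFinset u ∪ G.incidenceFinset v).card : ℚ) + 1
        = (G.degree u : ℚ) + G.degree v := by exact_mod_cast congrArg (Nat.cast (R := ℚ)) hcu
    linarith

theorem sum_edge_deleted_edges_sq (V : Type*) [Fintype V] (G : SimpleGraph V)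
    (m : ℚ) (hm : m = G.edgeFinset.card) :
    (∑ e ∈ G.edgeFinset, ((edel G e).edgeFinset.card : ℚ) ^ 2) =
      m ^ 3 + (Fidx G : ℚ) - 2 * m * (M1 G : ℚ) + 2 * (M2 G : ℚ)
        + 2 * m ^ 2 - 2 * (M1 G : ℚ) + m := by
  classical
  have hstep : ∀ e ∈ G.edgeFinset, ((edel G e).edgeFinset.card : ℚ) ^ 2
      = (m + 1) ^ 2 - 2 * (m + 1) * (degSum G e : ℚ) + (degSum G e : ℚ) ^ 2 := by
    intro e he
    rw [card_edel G he, ← hm]; ring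
  rw [Finset.sum_congr rfl hstep]
  have hS1 : ∑ e ∈ G.edgeFinset, (degSum G e : ℚ) = (M1 G : ℚ) := by
    calc ∑ e ∈ G.edgeFinset, (degSum G e : ℚ)
        = ∑ e ∈ G.edgeFinset, Sym2.lift ⟨fun u v => (G.degree u : ℚ) + (G.degree v : ℚ),
            fun u v => by ring⟩ e := by
          refine Finset.sum_congr rfl fun e _ => ?_
          induction e with
          | _ u v => rw [degSum_def]; push_cast; rw [Sym2.lift_mk]
      _ = ∑ v : V, (G.degree v : ℚ) * (G.degree v : ℚ) := sum_edge_pair G _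
      _ = (M1 G : ℚ) := by
          rw [M1, M1gen]; push_cast
          exact Finset.sum_congr rfl fun v _ => (pow_two _).symm
  have hF : ∑ e ∈ G.edgeFinset, Sym2.lift ⟨fun u v => (G.degree u : ℚ) ^ 2
        + (G.degree v : ℚ) ^ 2, fun u v => by ring⟩ e = (Fidx G : ℚ) := by
    rw [sum_edge_pair G (fun v => (G.degree v : ℚ) ^ 2), Fidx, M1gen]
    push_cast
    exact Finset.sum_congr rfl fun v _ => by ring
  have hM2 : ∑ e ∈ G.edgeFinset, Sym2.lift ⟨fun u v => (G.degree u : ℚ) * (G.degree v : ℚ),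
      fun u v => by ring⟩ e = (M2 G : ℚ) := by
    rw [M2]
    push_cast
    refine Finset.sum_congr rfl fun e _ => ?_
    induction e with
    | _ u v => rw [Sym2.lift_mk, Sym2.lift_mk]; push_cast; ring
  have hS2 : ∑ e ∈ G.edgeFinset, (degSum G e : ℚ) ^ 2 = (Fidx G : ℚ) + 2 * (M2 G : ℚ) := by
    rw [← hF, ← hM2, Finset.mul_sum, ← Finset.sum_add_distrib]
    refine Finset.sum_congr rfl fun e _ => ?_
    induction e with
    | _ u v =>
      rw [degSum_def, Sym2.lift_mk, Sym2.lift_mk]; push_cast; ring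
  rw [Finset.sum_add_distrib, Finset.sum_sub_distrib, Finset.sum_const, ← Finset.mul_sum,
    hS1, hS2, nsmul_eq_mul, ← hm]
  ring

end PaperMatching
end

section
/- For any simple graph G with m edges, Σ_{uv∈E(G)} e(G−{u,v})³ = m⁴ − 3m²M₁(G) + 3mF(G) + 6mM₂(G) − M₁⁴(G) − 3α(G) + 3m³ − 6mM₁(G) + 3F(G) + 6M₂(G) + 3m² − 3M₁(G) + m, where M₁⁴(G) = Σ_v deg(v)⁴ and α(G) = Σ_{uv∈E(G)} deg(u)deg(v)(deg(u)+deg(v)). -/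
open Finset

namespace PaperMatching

open scoped Classical

variable {V : Type*}

section Helpers

variable {V : Type*} [Fintype V]

private lemma deg_filter_card (G : SimpleGraph V) (v : V) :
    (G.edgeFinset.filter (fun e => v ∈ e)).card = G.degree v := by
  classical
  rw [← SimpleGraph.incidenceFinset_eq_filter, SimpleGraph.card_incidenceFinset_eq_degree]

private lemma sum_lift_eq (G : SimpleGraph V) (f : V → ℚ) :
    ∑ e ∈ G.edgeFinset,
        Sym2.lift ⟨fun u v => f u + f v, fun u v => by ring⟩ e
      = ∑ v : V, (G.degree v : ℚ) * f v := by
  classical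
  have h : ∀ e ∈ G.edgeFinset,
      Sym2.lift ⟨fun u v => f u + f v, fun u v => by ring⟩ e
        = ∑ w : V, if w ∈ e then f w else 0 := by
    intro e he
    induction e with
    | _ u v =>
      have hadj : G.Adj u v := by simpa using he
      have hne : u ≠ v := hadj.ne
      rw [Sym2.lift_mk, ← Finset.sum_filter]
      have : (univ.filter (· ∈ s(u,v)) : Finset V) = {u, v} := by
        ext w; simp [Sym2.mem_iff]
      rw [this, Finset.sum_insert (by simp [hne]), Finset.sum_singleton]
  rw [Finset.sum_congr rfl h, Finset.sum_comm]
  refine Finset.sum_congr rfl fun w _ => ?_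
  rw [← Finset.sum_filter, Finset.sum_const, deg_filter_card, nsmul_eq_mul]

private lemma edel_edgeFinset (G : SimpleGraph V) (e : Sym2 V) :
    (edel G e).edgeFinset = G.edgeFinset.filter (fun f => ∀ v ∈ f, v ∉ e) := by
  classical
  ext f
  induction f with
  | _ a b =>
    rw [SimpleGraph.mem_edgeFinset]
    simp [edel, SimpleGraph.mem_edgeFinset, Sym2.mem_iff, or_imp, forall_and]

private lemma card_edel_s11 (G : SimpleGraph V) {u v : V} (h : G.Adj u v) :
    ((edel G s(u,v)).edgeFinset.card : ℚ)
      = (G.edgeFinset.card : ℚ) - (G.degree u + G.degree v) + 1 := by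
  classical
  have key : (edel G s(u,v)).edgeFinset.card + (G.degree u + G.degree v)
      = G.edgeFinset.card + 1 := by
    have hsplit : (G.edgeFinset.filter (fun f => ∀ w ∈ f, w ∉ s(u,v))).card
        + (G.edgeFinset.filter (fun f => ¬ ∀ w ∈ f, w ∉ s(u,v))).card
        = G.edgeFinset.card := Finset.card_filter_add_card_filter_not _
    have hneg : G.edgeFinset.filter (fun f => ¬ ∀ w ∈ f, w ∉ s(u,v))
        = G.edgeFinset.filter (fun f => u ∈ f ∨ v ∈ f) := by
      apply Finset.filter_congr
      intro f hf
      push_neg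
      simp only [Sym2.mem_iff, not_not]
      constructor
      · rintro ⟨w, hw, (rfl | rfl)⟩
        · exact Or.inl hw
        · exact Or.inr hw
      · rintro (hw | hw)
        · exact ⟨u, hw, Or.inl rfl⟩
        · exact ⟨v, hw, Or.inr rfl⟩
    have hUnion : G.edgeFinset.filter (fun f => u ∈ f ∨ v ∈ f)
        = G.edgeFinset.filter (fun f => u ∈ f) ∪ G.edgeFinset.filter (fun f => v ∈ f) := by
      rw [Finset.filter_or]
    have hInter : G.edgeFinset.filter (fun f => u ∈ f) ∩ G.edgeFinset.filter (fun f => v ∈ f)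
        = {s(u,v)} := by
      ext f
      simp only [Finset.mem_inter, Finset.mem_filter, Finset.mem_singleton]
      constructor
      · rintro ⟨⟨_, hu⟩, ⟨_, hv⟩⟩
        exact (Sym2.mem_and_mem_iff h.ne).mp ⟨hu, hv⟩
      · rintro rfl
        simp [SimpleGraph.mem_edgeFinset, h]
    have hcard : (G.edgeFinset.filter (fun f => u ∈ f ∨ v ∈ f)).card + 1
        = G.degree u + G.degree v := by
      have := Finset.card_union_add_card_inter (G.edgeFinset.filter (fun f => u ∈ f))
        (G.edgeFinset.filter (fun f => v ∈ f))
      rw [hInter, Finset.card_singleton] at this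
      rw [hUnion, this]
      rw [← SimpleGraph.incidenceFinset_eq_filter, SimpleGraph.card_incidenceFinset_eq_degree,
        ← SimpleGraph.incidenceFinset_eq_filter, SimpleGraph.card_incidenceFinset_eq_degree]
    rw [hneg] at hsplit
    rw [edel_edgeFinset]
    omega
  have := congrArg (Nat.cast : ℕ → ℚ) key
  push_cast at this
  linarith

end Helpers

theorem sum_edge_deleted_edges_cube (V : Type*) [Fintype V] (G : SimpleGraph V)
    (m : ℚ) (hm : m = G.edgeFinset.card) :
    (∑ e ∈ G.edgeFinset, ((edel G e).edgeFinset.card : ℚ) ^ 3) =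
      m ^ 4 - 3 * m ^ 2 * (M1 G : ℚ) + 3 * m * (Fidx G : ℚ) + 6 * m * (M2 G : ℚ)
        - (M1gen G 4 : ℚ) - 3 * (alphaI G : ℚ) + 3 * m ^ 3 - 6 * m * (M1 G : ℚ)
        + 3 * (Fidx G : ℚ) + 6 * (M2 G : ℚ) + 3 * m ^ 2 - 3 * (M1 G : ℚ) + m := by
  classical
  -- rational lift sums
  have h1 : ∑ e ∈ G.edgeFinset, ((degSum G e : ℚ)) = (M1 G : ℚ) := by
    have : ∀ e ∈ G.edgeFinset, ((degSum G e : ℚ))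
        = Sym2.lift ⟨fun u v => (G.degree u : ℚ) + (G.degree v : ℚ), fun u v => by ring⟩ e := by
      intro e he
      induction e with
      | _ u v => simp only [degSum, Sym2.lift_mk]; push_cast; try ring
    rw [Finset.sum_congr rfl this, sum_lift_eq]
    rw [M1, M1gen]
    push_cast
    exact Finset.sum_congr rfl fun v _ => by ring
  have hF : ∑ e ∈ G.edgeFinset,
      Sym2.lift ⟨fun u v => (G.degree u : ℚ)^2 + (G.degree v : ℚ)^2, fun u v => by ring⟩ e
        = (Fidx G : ℚ) := by
    rw [sum_lift_eq, Fidx, M1gen]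
    push_cast
    exact Finset.sum_congr rfl fun v _ => by ring
  have h4 : ∑ e ∈ G.edgeFinset,
      Sym2.lift ⟨fun u v => (G.degree u : ℚ)^3 + (G.degree v : ℚ)^3, fun u v => by ring⟩ e
        = (M1gen G 4 : ℚ) := by
    rw [sum_lift_eq, M1gen]
    push_cast
    exact Finset.sum_congr rfl fun v _ => by ring
  have hP : ∑ e ∈ G.edgeFinset,
      Sym2.lift ⟨fun u v => (G.degree u : ℚ) * (G.degree v : ℚ), fun u v => by ring⟩ e
        = (M2 G : ℚ) := by
    rw [M2, Nat.cast_sum]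
    refine Finset.sum_congr rfl fun e he => ?_
    induction e with
    | _ u v => simp [Sym2.lift_mk]
  have hA : ∑ e ∈ G.edgeFinset,
      Sym2.lift ⟨fun u v => (G.degree u : ℚ) * (G.degree v : ℚ) * ((G.degree u : ℚ) + (G.degree v : ℚ)),
        fun u v => by ring⟩ e = (alphaI G : ℚ) := by
    rw [alphaI, Nat.cast_sum]
    refine Finset.sum_congr rfl fun e he => ?_
    induction e with
    | _ u v => simp only [Sym2.lift_mk]; push_cast; try ring
  have expand : ∀ e ∈ G.edgeFinset, ((edel G e).edgeFinset.card : ℚ) ^ 3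
      = (m+1)^3 - 3*(m+1)^2 * (degSum G e : ℚ)
        + 3*(m+1) * (Sym2.lift ⟨fun u v => (G.degree u : ℚ)^2 + (G.degree v : ℚ)^2, fun u v => by ring⟩ e)
        + 6*(m+1) * (Sym2.lift ⟨fun u v => (G.degree u : ℚ) * (G.degree v : ℚ), fun u v => by ring⟩ e)
        - (Sym2.lift ⟨fun u v => (G.degree u : ℚ)^3 + (G.degree v : ℚ)^3, fun u v => by ring⟩ e)
        - 3 * (Sym2.lift ⟨fun u v => (G.degree u : ℚ) * (G.degree v : ℚ) * ((G.degree u : ℚ) + (G.degree v : ℚ)),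
            fun u v => by ring⟩ e) := by
    intro e he
    induction e with
    | _ u v =>
      have hadj : G.Adj u v := by simpa using he
      rw [card_edel_s11 G hadj]
      simp only [degSum, Sym2.lift_mk, hm]
      push_cast
      ring
  rw [Finset.sum_congr rfl expand]
  simp only [Finset.sum_sub_distrib, Finset.sum_add_distrib, ← Finset.mul_sum,
    Finset.sum_const, nsmul_eq_mul]
  rw [h1, hF, hP, h4, hA, ← hm]
  ring

end PaperMatching
end

section
/- For any simple graph G, β(G) − α(G) = M₁⁴(G) − 3F(G) + 2M₁(G) − 2M₂(G), where β(G) = Σ_{e∼f} deg(e∩f)·(deg(e)+deg(f)) (summed over unordered pairs of incident edges, with e∩f their common vertex and deg(e)=deg(u)+deg(v)−2 for e=uv), and α(G) = Σ_{uv∈E} deg(u)deg(v)(deg(u)+deg(v)). -/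
open Finset

namespace PaperMatching

open scoped Classical

variable {V : Type*}

noncomputable def dQ (G : SimpleGraph V) [Fintype V] (v : V) : ℚ := (G.degree v : ℚ)

noncomputable def SQ (G : SimpleGraph V) [Fintype V] (v : V) : ℚ :=
  ∑ u ∈ G.neighborFinset v, dQ G u

variable [Fintype V]

lemma card_nbr (G : SimpleGraph V) (b : V) : ((G.neighborFinset b).card : ℚ) = dQ G b := by
  rw [G.card_neighborFinset_eq_degree]; rfl

lemma edge_sum (G : SimpleGraph V) (f : V → V → ℚ) (hf : ∀ u v, f u v = f v u) :
    2 * ∑ e ∈ G.edgeFinset, Sym2.lift ⟨f, hf⟩ e =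
      ∑ v : V, ∑ u ∈ G.neighborFinset v, f v u := by
  classical
  have hmaps : ∀ p ∈ (univ : Finset (V × V)).filter (fun p => G.Adj p.1 p.2),
      s(p.1, p.2) ∈ G.edgeFinset := by
    intro p hp
    simp only [mem_filter] at hp
    simpa [SimpleGraph.mem_edgeFinset] using hp.2
  have h1 : ∑ p ∈ (univ : Finset (V × V)).filter (fun p => G.Adj p.1 p.2), f p.1 p.2
      = ∑ e ∈ G.edgeFinset, ∑ p ∈ ((univ : Finset (V × V)).filter
          (fun p => G.Adj p.1 p.2)).filter (fun p => s(p.1, p.2) = e), f p.1 p.2 :=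
    (Finset.sum_fiberwise_of_maps_to hmaps _).symm
  have h2 : ∀ e ∈ G.edgeFinset,
      ∑ p ∈ ((univ : Finset (V × V)).filter (fun p => G.Adj p.1 p.2)).filter
        (fun p => s(p.1, p.2) = e), f p.1 p.2 = 2 * Sym2.lift ⟨f, hf⟩ e := by
    intro e he
    induction e using Sym2.inductionOn with
    | hf u v =>
      have hadj : G.Adj u v := by simpa [SimpleGraph.mem_edgeFinset] using he
      have hne : u ≠ v := hadj.ne
      have hset : ((univ : Finset (V × V)).filter (fun p => G.Adj p.1 p.2)).filter
          (fun p => s(p.1, p.2) = s(u, v)) = {(u, v), (v, u)} := by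
        ext ⟨a, b⟩
        simp only [mem_filter, mem_univ, true_and, mem_insert, mem_singleton, Prod.mk.injEq,
          Sym2.eq_iff]
        constructor
        · rintro ⟨hab, (⟨rfl, rfl⟩ | ⟨rfl, rfl⟩)⟩ <;> simp
        · rintro (⟨rfl, rfl⟩ | ⟨rfl, rfl⟩) <;> simp [hadj, hadj.symm]
      rw [hset, Finset.sum_pair (by simp [hne.symm, Prod.ext_iff])]
      rw [Sym2.lift_mk]
      rw [hf v u]; ring
  rw [Finset.sum_congr rfl h2] at h1
  rw [Finset.mul_sum] at *
  rw [← h1]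
  rw [Finset.sum_filter, Fintype.sum_prod_type]
  refine Finset.sum_congr rfl fun v _ => ?_
  rw [SimpleGraph.neighborFinset_eq_filter, Finset.sum_filter]

lemma sum_neighbor_swap (G : SimpleGraph V) (h : V → V → ℚ) :
    ∑ v : V, ∑ u ∈ G.neighborFinset v, h v u = ∑ v : V, ∑ u ∈ G.neighborFinset v, h u v := by
  simp only [SimpleGraph.neighborFinset_eq_filter, Finset.sum_filter]
  rw [Finset.sum_comm]
  refine Finset.sum_congr rfl fun v _ => Finset.sum_congr rfl fun u _ => ?_
  rw [G.adj_comm]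

lemma Q_sum (G : SimpleGraph V) (g : V → V → V → ℚ) :
    ∑ t ∈ (univ : Finset (V × V × V)).filter
        (fun t => G.Adj t.1 t.2.1 ∧ G.Adj t.2.1 t.2.2 ∧ t.1 ≠ t.2.2), g t.1 t.2.1 t.2.2
      = ∑ b : V, ∑ a ∈ G.neighborFinset b, ∑ c ∈ (G.neighborFinset b).erase a, g a b c := by
  classical
  rw [Finset.sum_filter]
  simp only [Fintype.sum_prod_type]
  rw [Finset.sum_comm]
  refine Finset.sum_congr rfl fun b _ => ?_
  have key : ∀ a : V, (∑ c : V, if G.Adj a b ∧ G.Adj b c ∧ a ≠ c then g a b c else 0)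
      = if G.Adj b a then ∑ c ∈ (G.neighborFinset b).erase a, g a b c else 0 := by
    intro a
    by_cases h : G.Adj b a
    · rw [if_pos h]
      have hset : (G.neighborFinset b).erase a
          = univ.filter (fun c => G.Adj a b ∧ G.Adj b c ∧ a ≠ c) := by
        ext c
        simp only [Finset.mem_erase, SimpleGraph.mem_neighborFinset, mem_filter, mem_univ,
          true_and]
        constructor
        · rintro ⟨h1, h2⟩; exact ⟨h.symm, h2, fun hac => h1 hac.symm⟩
        · rintro ⟨_, h2, h3⟩; exact ⟨fun hca => h3 hca.symm, h2⟩
      rw [hset, Finset.sum_filter]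
    · rw [if_neg h]
      refine Finset.sum_eq_zero fun c _ => ?_
      rw [if_neg]; rintro ⟨h1, _, _⟩; exact h h1.symm
  rw [Finset.sum_congr rfl fun a _ => key a]
  rw [SimpleGraph.neighborFinset_eq_filter, Finset.sum_filter]

lemma degE_mk (G : SimpleGraph V) (a b : V) : degE G s(a, b) = dQ G a + dQ G b - 2 := by
  simp only [degE, degSum, Sym2.lift_mk, dQ]
  push_cast; ring

lemma incPairs_sum (G : SimpleGraph V) (F : Sym2 V → Sym2 V → ℚ) :
    ∑ p ∈ incPairs G, F p.1 p.2 =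
      ∑ t ∈ (univ : Finset (V × V × V)).filter
        (fun t => G.Adj t.1 t.2.1 ∧ G.Adj t.2.1 t.2.2 ∧ t.1 ≠ t.2.2),
        F s(t.1, t.2.1) s(t.2.1, t.2.2) := by
  classical
  refine (Finset.sum_bij (fun t _ => ((s(t.1, t.2.1), s(t.2.1, t.2.2)) : Sym2 V × Sym2 V))
    ?_ ?_ ?_ ?_).symm
  · rintro ⟨a, b, c⟩ ht
    simp only [mem_filter, mem_univ, true_and] at ht
    obtain ⟨hab, hbc, hac⟩ := ht
    simp only [incPairs, mem_filter, mem_product, SimpleGraph.mem_edgeFinset,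
      SimpleGraph.mem_edgeSet]
    refine ⟨⟨hab, hbc⟩, ?_, ⟨b, ?_, ?_⟩⟩
    · intro heq
      rw [Sym2.eq_iff] at heq
      rcases heq with ⟨rfl, rfl⟩ | ⟨rfl, _⟩
      · exact hab.ne rfl
      · exact hac rfl
    · exact Sym2.mem_mk_right a b
    · exact Sym2.mem_mk_left b c
  · rintro ⟨a, b, c⟩ h1 ⟨a', b', c'⟩ h2 heq
    simp only [mem_filter, mem_univ, true_and] at h1 h2
    obtain ⟨hab, hbc, hac⟩ := h1
    obtain ⟨hab', hbc', hac'⟩ := h2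
    simp only [Prod.mk.injEq, Sym2.eq_iff] at heq
    obtain ⟨e1, e2⟩ := heq
    rcases e1 with ⟨rfl, rfl⟩ | ⟨h1, h2⟩
    · rcases e2 with ⟨_, rfl⟩ | ⟨rfl, h4⟩
      · rfl
      · exact absurd h4.symm hbc.ne
    · rcases e2 with ⟨h3, h4⟩ | ⟨h3, h4⟩
      · exact absurd (h1.trans h3.symm) hab.ne
      · exact absurd (h1.trans h4.symm) hac
  · rintro ⟨e, f⟩ hp
    simp only [incPairs, mem_filter, mem_product, SimpleGraph.mem_edgeFinset] at hp
    obtain ⟨⟨he, hf⟩, hne, v, hv1, hv2⟩ := hp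
    obtain ⟨a, rfl⟩ := Sym2.mem_iff_exists.mp hv1
    obtain ⟨c, rfl⟩ := Sym2.mem_iff_exists.mp hv2
    have hva : G.Adj v a := (SimpleGraph.mem_edgeSet G).mp he
    have hvc : G.Adj v c := (SimpleGraph.mem_edgeSet G).mp hf
    have hac : a ≠ c := fun h => hne (by rw [h])
    refine ⟨(a, v, c), ?_, ?_⟩
    · simp only [mem_filter, mem_univ, true_and]
      exact ⟨hva.symm, hvc, hac⟩
    · simp [Sym2.eq_swap]
  · rintro ⟨a, b, c⟩ ht
    rfl

lemma inner_sum (G : SimpleGraph V) (b a : V) (ha : a ∈ G.neighborFinset b) :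
    ∑ c ∈ (G.neighborFinset b).erase a,
      dQ G b * ((dQ G a + dQ G b - 2) + (dQ G b + dQ G c - 2))
    = (dQ G b - 1) * (dQ G b * (dQ G a + 2 * dQ G b - 4)) + dQ G b * (SQ G b - dQ G a) := by
  have h1 : ∑ c ∈ (G.neighborFinset b).erase a, dQ G c = SQ G b - dQ G a :=
    Finset.sum_erase_eq_sub ha
  have h2 : (((G.neighborFinset b).erase a).card : ℚ) = dQ G b - 1 := by
    rw [Finset.card_erase_of_mem ha, Nat.cast_sub (Finset.card_pos.mpr ⟨a, ha⟩),
      card_nbr]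
    norm_num
  calc ∑ c ∈ (G.neighborFinset b).erase a,
        dQ G b * ((dQ G a + dQ G b - 2) + (dQ G b + dQ G c - 2))
      = ∑ c ∈ (G.neighborFinset b).erase a,
        (dQ G b * (dQ G a + 2 * dQ G b - 4) + dQ G b * dQ G c) :=
        Finset.sum_congr rfl fun c _ => by ring
    _ = ((G.neighborFinset b).erase a).card • (dQ G b * (dQ G a + 2 * dQ G b - 4))
        + dQ G b * ∑ c ∈ (G.neighborFinset b).erase a, dQ G c := by
        rw [Finset.sum_add_distrib, Finset.sum_const, ← Finset.mul_sum]
    _ = _ := by rw [h1, nsmul_eq_mul, h2]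

lemma outer_sum (G : SimpleGraph V) (b : V) :
    ∑ a ∈ G.neighborFinset b,
      ((dQ G b - 1) * (dQ G b * (dQ G a + 2 * dQ G b - 4)) + dQ G b * (SQ G b - dQ G a))
    = 2 * ((dQ G b ^ 2 - dQ G b) * SQ G b
      + (dQ G b ^ 4 - 3 * dQ G b ^ 3 + 2 * dQ G b ^ 2)) := by
  calc ∑ a ∈ G.neighborFinset b,
        ((dQ G b - 1) * (dQ G b * (dQ G a + 2 * dQ G b - 4)) + dQ G b * (SQ G b - dQ G a))
      = ∑ a ∈ G.neighborFinset b,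
        (((dQ G b - 1) * dQ G b - dQ G b) * dQ G a
          + ((dQ G b - 1) * (dQ G b * (2 * dQ G b - 4)) + dQ G b * SQ G b)) :=
        Finset.sum_congr rfl fun a _ => by ring
    _ = ((dQ G b - 1) * dQ G b - dQ G b) * SQ G b
        + (G.neighborFinset b).card • ((dQ G b - 1) * (dQ G b * (2 * dQ G b - 4))
            + dQ G b * SQ G b) := by
        rw [Finset.sum_add_distrib, Finset.sum_const, ← Finset.mul_sum]; rfl
    _ = _ := by rw [nsmul_eq_mul, card_nbr]; ring

lemma M1gen_cast (G : SimpleGraph V) (k : ℕ) : (M1gen G k : ℚ) = ∑ v : V, dQ G v ^ k := by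
  rw [M1gen]; push_cast; rfl

lemma alpha_eq (G : SimpleGraph V) : (alphaI G : ℚ) = ∑ v : V, dQ G v ^ 2 * SQ G v := by
  have hsym : ∀ u v : V, dQ G u * dQ G v * (dQ G u + dQ G v)
      = dQ G v * dQ G u * (dQ G v + dQ G u) := fun u v => by ring
  have h0 : (alphaI G : ℚ) = ∑ e ∈ G.edgeFinset,
      Sym2.lift ⟨fun u v => dQ G u * dQ G v * (dQ G u + dQ G v), hsym⟩ e := by
    rw [alphaI, Nat.cast_sum]
    refine Finset.sum_congr rfl fun e _ => ?_
    induction e using Sym2.inductionOn with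
    | hf u v => simp only [Sym2.lift_mk, dQ]; push_cast; ring
  have h1 := edge_sum G _ hsym
  have h2 : ∑ v : V, ∑ u ∈ G.neighborFinset v, dQ G v * dQ G u * (dQ G v + dQ G u)
      = 2 * ∑ v : V, dQ G v ^ 2 * SQ G v := by
    calc ∑ v : V, ∑ u ∈ G.neighborFinset v, dQ G v * dQ G u * (dQ G v + dQ G u)
        = (∑ v : V, ∑ u ∈ G.neighborFinset v, dQ G v ^ 2 * dQ G u)
          + ∑ v : V, ∑ u ∈ G.neighborFinset v, dQ G v * dQ G u ^ 2 := by
          rw [← Finset.sum_add_distrib]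
          refine Finset.sum_congr rfl fun v _ => ?_
          rw [← Finset.sum_add_distrib]
          exact Finset.sum_congr rfl fun u _ => by ring
      _ = (∑ v : V, ∑ u ∈ G.neighborFinset v, dQ G v ^ 2 * dQ G u)
          + ∑ v : V, ∑ u ∈ G.neighborFinset v, dQ G u * dQ G v ^ 2 := by
          rw [sum_neighbor_swap G (fun v u => dQ G v * dQ G u ^ 2)]
      _ = 2 * ∑ v : V, dQ G v ^ 2 * SQ G v := by
          simp only [← Finset.mul_sum]
          rw [← Finset.sum_add_distrib, Finset.mul_sum]
          refine Finset.sum_congr rfl fun v _ => ?_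
          rw [SQ, Finset.mul_sum, Finset.mul_sum, ← Finset.sum_add_distrib]
          refine Finset.sum_congr rfl fun u _ => by ring
  have h3 : 2 * (alphaI G : ℚ) = 2 * ∑ v : V, dQ G v ^ 2 * SQ G v := by
    rw [h0, h1, h2]
  linarith

lemma M2_eq (G : SimpleGraph V) : 2 * (M2 G : ℚ) = ∑ v : V, dQ G v * SQ G v := by
  have hsym : ∀ u v : V, dQ G u * dQ G v = dQ G v * dQ G u := fun u v => by ring
  have h0 : (M2 G : ℚ) = ∑ e ∈ G.edgeFinset,
      Sym2.lift ⟨fun u v => dQ G u * dQ G v, hsym⟩ e := by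
    rw [M2, Nat.cast_sum]
    refine Finset.sum_congr rfl fun e _ => ?_
    induction e using Sym2.inductionOn with
    | hf u v => simp only [Sym2.lift_mk, dQ]; push_cast; ring
  rw [h0, edge_sum G _ hsym]
  exact Finset.sum_congr rfl fun v _ => by rw [SQ, Finset.mul_sum]

lemma beta_eq (G : SimpleGraph V) : betaI G = ∑ b : V,
    ((dQ G b ^ 2 - dQ G b) * SQ G b + (dQ G b ^ 4 - 3 * dQ G b ^ 3 + 2 * dQ G b ^ 2)) := by
  classical
  rw [betaI]
  have h1 : (∑ p ∈ incPairs G, ∑ v ∈ univ.filter (fun v : V => v ∈ p.1 ∧ v ∈ p.2),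
        (G.degree v : ℚ) * (degE G p.1 + degE G p.2))
      = ∑ t ∈ (univ : Finset (V × V × V)).filter
          (fun t => G.Adj t.1 t.2.1 ∧ G.Adj t.2.1 t.2.2 ∧ t.1 ≠ t.2.2),
        ∑ v ∈ univ.filter (fun v : V => v ∈ s(t.1, t.2.1) ∧ v ∈ s(t.2.1, t.2.2)),
          (G.degree v : ℚ) * (degE G s(t.1, t.2.1) + degE G s(t.2.1, t.2.2)) :=
    incPairs_sum G (fun e f => ∑ v ∈ univ.filter (fun v : V => v ∈ e ∧ v ∈ f),
      (G.degree v : ℚ) * (degE G e + degE G f))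
  have h2 : ∀ t ∈ (univ : Finset (V × V × V)).filter
      (fun t => G.Adj t.1 t.2.1 ∧ G.Adj t.2.1 t.2.2 ∧ t.1 ≠ t.2.2),
      (∑ v ∈ univ.filter (fun v : V => v ∈ s(t.1, t.2.1) ∧ v ∈ s(t.2.1, t.2.2)),
        (G.degree v : ℚ) * (degE G s(t.1, t.2.1) + degE G s(t.2.1, t.2.2)))
      = dQ G t.2.1 * ((dQ G t.1 + dQ G t.2.1 - 2) + (dQ G t.2.1 + dQ G t.2.2 - 2)) := by
    rintro ⟨a, b, c⟩ ht
    simp only [mem_filter, mem_univ, true_and] at ht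
    obtain ⟨hab, hbc, hac⟩ := ht
    have hfil : univ.filter (fun v : V => v ∈ s(a, b) ∧ v ∈ s(b, c)) = {b} := by
      ext v
      simp only [mem_filter, mem_univ, true_and, Sym2.mem_iff, mem_singleton]
      constructor
      · rintro ⟨h1 | h1, h2 | h2⟩
        · exact h2
        · exact absurd (h1.symm.trans h2) hac
        · exact h1
        · exact h1
      · rintro rfl
        exact ⟨Or.inr rfl, Or.inl rfl⟩
    rw [hfil, Finset.sum_singleton, degE_mk, degE_mk]
    rfl
  rw [h1, Finset.sum_congr rfl h2]
  have h3 : (∑ t ∈ (univ : Finset (V × V × V)).filter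
        (fun t => G.Adj t.1 t.2.1 ∧ G.Adj t.2.1 t.2.2 ∧ t.1 ≠ t.2.2),
        dQ G t.2.1 * ((dQ G t.1 + dQ G t.2.1 - 2) + (dQ G t.2.1 + dQ G t.2.2 - 2)))
      = ∑ b : V, ∑ a ∈ G.neighborFinset b, ∑ c ∈ (G.neighborFinset b).erase a,
        dQ G b * ((dQ G a + dQ G b - 2) + (dQ G b + dQ G c - 2)) :=
    Q_sum G (fun a b c => dQ G b * ((dQ G a + dQ G b - 2) + (dQ G b + dQ G c - 2)))
  rw [h3]
  have h4 : ∀ b : V, ∑ a ∈ G.neighborFinset b, ∑ c ∈ (G.neighborFinset b).erase a,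
      dQ G b * ((dQ G a + dQ G b - 2) + (dQ G b + dQ G c - 2))
      = 2 * ((dQ G b ^ 2 - dQ G b) * SQ G b
        + (dQ G b ^ 4 - 3 * dQ G b ^ 3 + 2 * dQ G b ^ 2)) := by
    intro b
    rw [Finset.sum_congr rfl (fun a ha => inner_sum G b a ha)]
    exact outer_sum G b
  rw [Finset.sum_congr rfl fun b _ => h4 b, ← Finset.mul_sum]
  ring


theorem beta_sub_alpha (V : Type*) [Fintype V] (G : SimpleGraph V) :
    betaI G - (alphaI G : ℚ) =
      (M1gen G 4 : ℚ) - 3 * (Fidx G : ℚ) + 2 * (M1 G : ℚ) - 2 * (M2 G : ℚ) := by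
  rw [beta_eq, alpha_eq, Fidx, M1, M1gen_cast, M1gen_cast, M1gen_cast, M2_eq]
  rw [← Finset.sum_sub_distrib, Finset.mul_sum, Finset.mul_sum,
    ← Finset.sum_sub_distrib, ← Finset.sum_add_distrib, ← Finset.sum_sub_distrib]
  exact Finset.sum_congr rfl fun b _ => by ring

end PaperMatching
end

section
/- For any simple graph G with girth greater than 3 and m edges, γ(G) = 2EM₂(G) − β(G) + 4EM₁(G) − 2F(G) + 6M₁(G) − 8m, where γ(G) = Σ_{{v,xy}} deg(v)(deg(x)+deg(y)) summed over pairs of a vertex v and an edge xy with v ∉ {x,y} and v adjacent to x or y, EM₂(G) = Σ_{e∼f} deg(e)deg(f), and β(G) = Σ_{e∼f} deg(e∩f)(deg(e)+deg(f)). -/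
open Finset

namespace PaperMatching

open scoped Classical

variable {V : Type*}

section Aux

variable {V : Type*} [Fintype V] (G : SimpleGraph V)

/-- Rational degree. -/
noncomputable def dq (v : V) : ℚ := G.degree v

/-- Sum of neighbor degrees. -/
noncomputable def Sq (v : V) : ℚ := ∑ x ∈ G.neighborFinset v, dq G x

/-- Sum of squares of neighbor degrees. -/
noncomputable def Tq (v : V) : ℚ := ∑ x ∈ G.neighborFinset v, (dq G x) ^ 2

/-- Sum of `Sq` over neighbors. -/
noncomputable def Uq (v : V) : ℚ := ∑ x ∈ G.neighborFinset v, Sq G x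

lemma tri_free (hg : (3 : ℕ∞) < G.egirth) {a b c : V}
    (hab : G.Adj a b) (hbc : G.Adj b c) : ¬ G.Adj a c := by
  intro hac
  have hca := hac.symm
  set w : G.Walk a a := SimpleGraph.Walk.cons hab (SimpleGraph.Walk.cons hbc
    (SimpleGraph.Walk.cons hca SimpleGraph.Walk.nil)) with hw
  have hc : w.IsCycle := by
    rw [SimpleGraph.Walk.isCycle_def]
    refine ⟨?_, by simp [hw], ?_⟩
    · rw [SimpleGraph.Walk.isTrail_def]
      simp only [hw, SimpleGraph.Walk.edges_cons, SimpleGraph.Walk.edges_nil]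
      have h1 : a ≠ b := hab.ne
      have h2 : b ≠ c := hbc.ne
      have h3 : c ≠ a := hca.ne
      simp [List.nodup_cons, Sym2.eq_iff]
      tauto
    · simp only [hw, SimpleGraph.Walk.support_cons, SimpleGraph.Walk.support_nil]
      have h1 : a ≠ b := hab.ne
      have h2 : b ≠ c := hbc.ne
      have h3 : c ≠ a := hca.ne
      simp [List.nodup_cons]
      tauto
  have hle := SimpleGraph.le_egirth.mp le_rfl a w hc
  have hlen : w.length = 3 := by simp [hw]
  rw [hlen] at hle
  exact absurd (lt_of_lt_of_le hg hle) (by simp)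

lemma pair_sum_eq (g : V → V → ℚ) : ∑ v : V, ∑ x ∈ G.neighborFinset v, g v x
    = ∑ p ∈ (univ ×ˢ univ).filter (fun p : V × V => G.Adj p.1 p.2), g p.1 p.2 := by
  rw [Finset.sum_filter, Finset.sum_product]
  exact Finset.sum_congr rfl fun v _ => by
    rw [SimpleGraph.neighborFinset_eq_filter, Finset.sum_filter]

lemma swap_sum (f : V → V → ℚ) :
    ∑ v : V, ∑ x ∈ G.neighborFinset v, f v x = ∑ v : V, ∑ x ∈ G.neighborFinset v, f x v := by
  rw [pair_sum_eq, pair_sum_eq]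
  refine Finset.sum_nbij' (fun p => Prod.swap p) (fun p => Prod.swap p) ?_ ?_ ?_ ?_ ?_ <;>
    simp +contextual [SimpleGraph.adj_comm]

lemma sum_edge (φ : Sym2 V → ℚ) :
    ∑ v : V, ∑ x ∈ G.neighborFinset v, φ s(v, x) = 2 * ∑ e ∈ G.edgeFinset, φ e := by
  rw [pair_sum_eq]
  rw [← Finset.sum_fiberwise_of_maps_to (g := fun p : V × V => s(p.1, p.2))
      (t := G.edgeFinset) (fun p hp => by
        simp only [Finset.mem_filter] at hp
        exact SimpleGraph.mem_edgeFinset.mpr hp.2)]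
  rw [Finset.mul_sum]
  refine Finset.sum_congr rfl fun e he => ?_
  revert he
  induction e using Sym2.ind with
  | _ u v =>
    intro he
    have hadj : G.Adj u v := SimpleGraph.mem_edgeFinset.mp he
    have hne : u ≠ v := hadj.ne
    have hfil : ((univ ×ˢ univ).filter (fun p : V × V => G.Adj p.1 p.2)).filter
        (fun p => s(p.1, p.2) = s(u, v)) = {(u, v), (v, u)} := by
      ext ⟨a, b⟩
      simp only [Finset.mem_filter, Finset.mem_product, Finset.mem_univ, true_and,
        Sym2.eq_iff, Finset.mem_insert, Finset.mem_singleton, Prod.mk.injEq]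
      constructor
      · rintro ⟨-, (⟨rfl, rfl⟩ | ⟨rfl, rfl⟩)⟩
        · left; exact ⟨rfl, rfl⟩
        · right; exact ⟨rfl, rfl⟩
      · rintro (⟨rfl, rfl⟩ | ⟨rfl, rfl⟩)
        · exact ⟨hadj, Or.inl ⟨rfl, rfl⟩⟩
        · exact ⟨hadj.symm, Or.inr ⟨rfl, rfl⟩⟩
    rw [hfil, Finset.sum_pair (by simp [hne, Prod.ext_iff])]
    rw [Sym2.eq_swap (a := v)]
    ring

lemma incPairs_sum_s17 (H : Sym2 V × Sym2 V → ℚ) :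
    ∑ p ∈ incPairs G, H p
      = ∑ v : V, ∑ x ∈ G.neighborFinset v, ∑ y ∈ (G.neighborFinset v).erase x,
          H (s(v, x), s(v, y)) := by
  have hsig : ∑ t ∈ (univ : Finset V).sigma
          (fun v => (G.neighborFinset v).sigma fun x => (G.neighborFinset v).erase x),
          H (s(t.1, t.2.1), s(t.1, t.2.2))
      = ∑ v : V, ∑ x ∈ G.neighborFinset v, ∑ y ∈ (G.neighborFinset v).erase x,
          H (s(v, x), s(v, y)) := by
    rw [Finset.sum_sigma]
    exact Finset.sum_congr rfl fun v _ => Finset.sum_sigma _ _ _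
  rw [← hsig]
  symm
  refine Finset.sum_bij (fun t _ => (s(t.1, t.2.1), s(t.1, t.2.2))) ?_ ?_ ?_ ?_
  · rintro ⟨v, x, y⟩ ht
    simp only [Finset.mem_sigma, Finset.mem_univ, true_and, Finset.mem_erase] at ht
    obtain ⟨hx, hyx, hy⟩ := ht
    rw [SimpleGraph.mem_neighborFinset] at hx hy
    simp only [incPairs, Finset.mem_filter, Finset.mem_product]
    refine ⟨⟨?_, ?_⟩, ?_, v, ?_, ?_⟩
    · exact SimpleGraph.mem_edgeFinset.mpr hx
    · exact SimpleGraph.mem_edgeFinset.mpr hy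
    · intro h
      rw [Sym2.eq_iff] at h
      rcases h with ⟨-, h⟩ | ⟨h, -⟩
      · exact hyx h.symm
      · exact hy.ne h
    · exact Sym2.mem_mk_left v x
    · exact Sym2.mem_mk_left v y
  · rintro ⟨v, x, y⟩ ht ⟨v', x', y'⟩ ht' h
    simp only [Finset.mem_sigma, Finset.mem_univ, true_and, Finset.mem_erase] at ht ht'
    obtain ⟨hx, hyx, hy⟩ := ht
    obtain ⟨hx', hyx', hy'⟩ := ht'
    rw [SimpleGraph.mem_neighborFinset] at hx hy hx' hy'
    simp only [Prod.mk.injEq, Sym2.eq_iff] at h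
    obtain ⟨h1, h2⟩ := h
    rcases h1 with ⟨hvv', hxx'⟩ | ⟨hvx', hxv'⟩
    · subst hvv'; subst hxx'
      rcases h2 with ⟨-, hyy'⟩ | ⟨hvy', hyv'⟩
      · subst hyy'; rfl
      · exact absurd hyv' hy.ne'
    · rcases h2 with ⟨hvv', -⟩ | ⟨-, hyv'⟩
      · exact absurd (hxv'.trans hvv'.symm) hx.ne'
      · exact absurd (hyv'.trans hxv'.symm) hyx
  · rintro ⟨e, f⟩ hp
    simp only [incPairs, Finset.mem_filter, Finset.mem_product] at hp
    obtain ⟨⟨he, hf⟩, hne, v, hve, hvf⟩ := hp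
    set x := Sym2.Mem.other hve with hxdef
    set y := Sym2.Mem.other hvf with hydef
    have hex : s(v, x) = e := Sym2.other_spec hve
    have hfy : s(v, y) = f := Sym2.other_spec hvf
    have hadjx : G.Adj v x := by
      rw [← SimpleGraph.mem_edgeSet, hex]; exact SimpleGraph.mem_edgeFinset.mp he
    have hadjy : G.Adj v y := by
      rw [← SimpleGraph.mem_edgeSet, hfy]; exact SimpleGraph.mem_edgeFinset.mp hf
    have hxy : y ≠ x := by
      intro h; apply hne; rw [← hex, ← hfy, h]
    refine ⟨⟨v, x, y⟩, ?_, ?_⟩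
    · simp only [Finset.mem_sigma, Finset.mem_univ, true_and, Finset.mem_erase,
        SimpleGraph.mem_neighborFinset]
      exact ⟨hadjx, hxy, hadjy⟩
    · simp only [Prod.mk.injEq]
      exact ⟨hex, hfy⟩
  · rintro ⟨v, x, y⟩ -
    rfl

lemma common_eq {v x y : V} (hvx : G.Adj v x) (hvy : G.Adj v y) (hxy : x ≠ y) :
    univ.filter (fun w : V => w ∈ s(v, x) ∧ w ∈ s(v, y)) = {v} := by
  ext w
  simp only [Finset.mem_filter, Finset.mem_univ, true_and, Sym2.mem_iff, Finset.mem_singleton]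
  constructor
  · rintro ⟨rfl | rfl, h2⟩
    · rfl
    · rcases h2 with rfl | rfl
      · exact absurd rfl hvx.ne'
      · exact absurd rfl hxy
  · rintro rfl
    exact ⟨Or.inl rfl, Or.inl rfl⟩

lemma gamma_inner (htf : ∀ ⦃a b c : V⦄, G.Adj a b → G.Adj b c → ¬ G.Adj a c) (v : V) :
    ∑ e ∈ G.edgeFinset,
        (if v ∉ e ∧ ∃ w ∈ e, G.Adj v w then dq G v * (degSum G e : ℚ) else 0)
      = ∑ x ∈ G.neighborFinset v, ∑ y ∈ (G.neighborFinset x).erase v,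
          dq G v * (dq G x + dq G y) := by
  rw [← Finset.sum_filter]
  have hsig : ∑ t ∈ (G.neighborFinset v).sigma (fun x => (G.neighborFinset x).erase v),
        dq G v * (dq G t.1 + dq G t.2)
      = ∑ x ∈ G.neighborFinset v, ∑ y ∈ (G.neighborFinset x).erase v,
          dq G v * (dq G x + dq G y) := Finset.sum_sigma _ _ _
  rw [← hsig]
  symm
  refine Finset.sum_bij (fun t _ => s(t.1, t.2)) ?_ ?_ ?_ ?_
  · rintro ⟨x, y⟩ ht
    simp only [Finset.mem_sigma, Finset.mem_erase, SimpleGraph.mem_neighborFinset] at ht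
    obtain ⟨hvx, hyv, hxy⟩ := ht
    simp only [Finset.mem_filter, SimpleGraph.mem_edgeFinset, SimpleGraph.mem_edgeSet,
      Sym2.mem_iff]
    refine ⟨hxy, ?_, x, Or.inl rfl, hvx⟩
    rintro (rfl | rfl)
    · exact hvx.ne rfl
    · exact hyv rfl
  · rintro ⟨x, y⟩ ht ⟨x', y'⟩ ht' h
    simp only [Finset.mem_sigma, Finset.mem_erase, SimpleGraph.mem_neighborFinset] at ht ht'
    obtain ⟨hvx, hyv, hxy⟩ := ht
    obtain ⟨hvx', hyv', hxy'⟩ := ht'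
    rw [Sym2.eq_iff] at h
    rcases h with ⟨rfl, rfl⟩ | ⟨rfl, rfl⟩
    · rfl
    · exact absurd hvx' (htf hvx hxy)
  · rintro e he
    simp only [Finset.mem_filter] at he
    obtain ⟨he, hve, w, hw, hadj⟩ := he
    set y := Sym2.Mem.other hw with hydef
    have hey : s(w, y) = e := Sym2.other_spec hw
    have hwy : G.Adj w y := by
      rw [← SimpleGraph.mem_edgeSet, hey]; exact SimpleGraph.mem_edgeFinset.mp he
    refine ⟨⟨w, y⟩, ?_, hey⟩
    simp only [Finset.mem_sigma, Finset.mem_erase, SimpleGraph.mem_neighborFinset]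
    refine ⟨hadj, ?_, hwy⟩
    intro hyv
    apply hve
    rw [← hey, hyv]
    exact Sym2.mem_mk_right w v
  · rintro ⟨x, y⟩ -
    simp only [degSum, Sym2.lift_mk, dq]
    push_cast
    ring

lemma sum_const_nbhd (v : V) (c : ℚ) : ∑ _x ∈ G.neighborFinset v, c = dq G v * c := by
  rw [Finset.sum_const, nsmul_eq_mul, G.card_neighborFinset_eq_degree]
  rfl

lemma sum_lin (v : V) (a b : ℚ) :
    ∑ y ∈ G.neighborFinset v, (a + b * dq G y) = dq G v * a + b * Sq G v := by
  rw [Finset.sum_add_distrib, ← Finset.mul_sum, sum_const_nbhd]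
  rfl

lemma inner_eval (v : V) (c0 c1 c2 c3 : ℚ) :
    ∑ x ∈ G.neighborFinset v, (c0 + c1 * dq G x + c2 * (dq G x) ^ 2 + c3 * Sq G x)
      = c0 * dq G v + c1 * Sq G v + c2 * Tq G v + c3 * Uq G v := by
  rw [Finset.sum_add_distrib, Finset.sum_add_distrib, Finset.sum_add_distrib,
    ← Finset.mul_sum, ← Finset.mul_sum, ← Finset.mul_sum, sum_const_nbhd]
  rw [Sq, Tq, Uq]
  ring

lemma hdegE (u w : V) : degE G s(u, w) = dq G u + dq G w - 2 := by
  simp only [degE, degSum, Sym2.lift_mk, dq]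
  push_cast
  ring

end Aux


theorem gamma_formula (V : Type*) [Fintype V] (G : SimpleGraph V)
    (hg : (3 : ℕ∞) < G.egirth) (m : ℚ) (hm : m = G.edgeFinset.card) :
    (gammaI G : ℚ) =
      2 * EM2 G - betaI G + 4 * EM1 G - 2 * (Fidx G : ℚ) + 6 * (M1 G : ℚ) - 8 * m := by
  classical
  have htf : ∀ ⦃a b c : V⦄, G.Adj a b → G.Adj b c → ¬ G.Adj a c := fun a b c h1 h2 =>
    tri_free G hg h1 h2
  -- atoms
  set A1 : ℚ := ∑ v : V, dq G v with hA1
  set A2 : ℚ := ∑ v : V, (dq G v) ^ 2 with hA2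
  set A3 : ℚ := ∑ v : V, (dq G v) ^ 3 with hA3
  set A4 : ℚ := ∑ v : V, (dq G v) ^ 4 with hA4
  set B1 : ℚ := ∑ v : V, dq G v * Sq G v with hB1
  set B2 : ℚ := ∑ v : V, (dq G v) ^ 2 * Sq G v with hB2
  set C2 : ℚ := ∑ v : V, (Sq G v) ^ 2 with hC2
  set SS : ℚ := ∑ v : V, Sq G v with hSS
  set TT : ℚ := ∑ v : V, Tq G v with hTT
  set DT : ℚ := ∑ v : V, dq G v * Tq G v with hDT
  set DU : ℚ := ∑ v : V, dq G v * Uq G v with hDU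
  -- swap identities
  have SW1 : TT = A3 := by
    rw [hTT, hA3]
    have h := swap_sum G (fun v x => (dq G x) ^ 2)
    rw [show (∑ v : V, Tq G v) = ∑ v : V, ∑ x ∈ G.neighborFinset v, (dq G x) ^ 2 from rfl, h]
    refine Finset.sum_congr rfl fun v _ => ?_
    rw [sum_const_nbhd]
    ring
  have SW4 : SS = A2 := by
    rw [hSS, hA2]
    have h := swap_sum G (fun v x => dq G x)
    rw [show (∑ v : V, Sq G v) = ∑ v : V, ∑ x ∈ G.neighborFinset v, dq G x from rfl, h]
    refine Finset.sum_congr rfl fun v _ => ?_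
    rw [sum_const_nbhd]
    ring
  have SW2 : DT = B2 := by
    rw [hDT, hB2]
    have h := swap_sum G (fun v x => dq G v * (dq G x) ^ 2)
    rw [show (∑ v : V, dq G v * Tq G v)
        = ∑ v : V, ∑ x ∈ G.neighborFinset v, dq G v * (dq G x) ^ 2 from by
      exact Finset.sum_congr rfl fun v _ => by rw [Tq, Finset.mul_sum], h]
    refine Finset.sum_congr rfl fun v _ => ?_
    rw [show ∑ x ∈ G.neighborFinset v, dq G x * (dq G v) ^ 2
        = ∑ x ∈ G.neighborFinset v, ((dq G v) ^ 2 * dq G x) from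
      Finset.sum_congr rfl fun x _ => by ring, ← Finset.mul_sum]
    rfl
  have SW3 : DU = C2 := by
    rw [hDU, hC2]
    have h := swap_sum G (fun v x => dq G v * Sq G x)
    rw [show (∑ v : V, dq G v * Uq G v)
        = ∑ v : V, ∑ x ∈ G.neighborFinset v, dq G v * Sq G x from by
      exact Finset.sum_congr rfl fun v _ => by rw [Uq, Finset.mul_sum], h]
    refine Finset.sum_congr rfl fun v _ => ?_
    rw [show ∑ x ∈ G.neighborFinset v, dq G x * Sq G v
        = ∑ x ∈ G.neighborFinset v, (Sq G v * dq G x) from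
      Finset.sum_congr rfl fun x _ => by ring, ← Finset.mul_sum]
    rw [Sq]
    ring
  -- basic quantities
  have Hm : 2 * m = A1 := by
    rw [hA1, hm]
    have h := G.sum_degrees_eq_twice_card_edges
    have : ((∑ v : V, G.degree v : ℕ) : ℚ) = ((2 * G.edgeFinset.card : ℕ) : ℚ) := by rw [h]
    push_cast at this
    rw [show (∑ v : V, dq G v) = ∑ v : V, ((G.degree v : ℚ)) from rfl]
    linarith [this]
  have HM1 : (M1 G : ℚ) = A2 := by
    rw [hA2, M1, M1gen]
    push_cast
    rfl
  have HF : (Fidx G : ℚ) = A3 := by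
    rw [hA3, Fidx, M1gen]
    push_cast
    rfl
  -- EM1
  have HEM1 : 2 * EM1 G = A3 - 4 * A2 + 4 * A1 + 2 * B1 - 4 * SS + TT := by
    have h := sum_edge G (fun e => (degE G e) ^ 2)
    rw [EM1, ← h]
    have h2 : ∀ v : V, ∑ x ∈ G.neighborFinset v, (degE G s(v, x)) ^ 2
        = (dq G v - 2) ^ 2 * dq G v + (2 * (dq G v - 2)) * Sq G v + 1 * Tq G v + 0 * Uq G v := by
      intro v
      rw [← inner_eval]
      refine Finset.sum_congr rfl fun x _ => ?_
      rw [hdegE]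
      ring
    rw [Finset.sum_congr rfl fun v _ => h2 v]
    rw [hA3, hA2, hA1, hB1, hSS, hTT]
    simp only [Finset.mul_sum, ← Finset.sum_add_distrib, ← Finset.sum_sub_distrib]
    exact Finset.sum_congr rfl fun v _ => by ring
  -- EM2
  have HEM2 : 2 * EM2 G = A4 - 5 * A3 + 2 * B2 + 8 * A2 - 6 * B1 - 4 * A1 + 4 * SS + C2 - TT := by
    have h0 : 2 * EM2 G = ∑ p ∈ incPairs G, degE G p.1 * degE G p.2 := by
      rw [EM2]; ring
    rw [h0, incPairs_sum_s17 G (fun p => degE G p.1 * degE G p.2)]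
    have h2 : ∀ v : V, ∑ x ∈ G.neighborFinset v, ∑ y ∈ (G.neighborFinset v).erase x,
          degE G s(v, x) * degE G s(v, y)
        = ((dq G v - 2) * ((dq G v) ^ 2 - 3 * dq G v + Sq G v + 2)) * dq G v
          + ((dq G v) ^ 2 - 4 * dq G v + Sq G v + 4) * Sq G v
          + (-1) * Tq G v + 0 * Uq G v := by
      intro v
      rw [← inner_eval]
      refine Finset.sum_congr rfl fun x hx => ?_
      rw [← Finset.mul_sum, Finset.sum_erase_eq_sub hx]
      have hy : ∑ y ∈ G.neighborFinset v, degE G s(v, y)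
          = dq G v * (dq G v - 2) + 1 * Sq G v := by
        rw [← sum_lin]
        exact Finset.sum_congr rfl fun y _ => by rw [hdegE]; ring
      rw [hy, hdegE]
      ring
    rw [Finset.sum_congr rfl fun v _ => h2 v]
    rw [hA4, hA3, hB2, hA2, hB1, hA1, hSS, hC2, hTT]
    simp only [Finset.mul_sum, ← Finset.sum_add_distrib, ← Finset.sum_sub_distrib,
      ← Finset.sum_neg_distrib]
    exact Finset.sum_congr rfl fun v _ => by ring
  -- beta
  have HB : 2 * betaI G = 2 * A4 - 6 * A3 + 4 * A2 + 2 * B2 - 2 * B1 := by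
    have h0 : 2 * betaI G = ∑ p ∈ incPairs G,
        ∑ w ∈ univ.filter (fun w : V => w ∈ p.1 ∧ w ∈ p.2),
          (G.degree w : ℚ) * (degE G p.1 + degE G p.2) := by
      rw [betaI]; ring
    rw [h0, incPairs_sum_s17 G (fun p => ∑ w ∈ univ.filter (fun w : V => w ∈ p.1 ∧ w ∈ p.2),
      (G.degree w : ℚ) * (degE G p.1 + degE G p.2))]
    have h2 : ∀ v : V, ∑ x ∈ G.neighborFinset v, ∑ y ∈ (G.neighborFinset v).erase x,
          ∑ w ∈ univ.filter (fun w : V => w ∈ s(v, x) ∧ w ∈ s(v, y)),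
            (G.degree w : ℚ) * (degE G s(v, x) + degE G s(v, y))
        = (2 * (dq G v) ^ 3 - 6 * (dq G v) ^ 2 + 4 * dq G v + dq G v * Sq G v) * dq G v
          + ((dq G v) ^ 2 - 2 * dq G v) * Sq G v + 0 * Tq G v + 0 * Uq G v := by
      intro v
      rw [← inner_eval]
      refine Finset.sum_congr rfl fun x hx => ?_
      have hvx : G.Adj v x := (SimpleGraph.mem_neighborFinset _ _ _).mp hx
      have hin : ∀ y ∈ (G.neighborFinset v).erase x,
          ∑ w ∈ univ.filter (fun w : V => w ∈ s(v, x) ∧ w ∈ s(v, y)),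
            (G.degree w : ℚ) * (degE G s(v, x) + degE G s(v, y))
          = dq G v * (2 * dq G v + dq G x - 4) + dq G v * dq G y := by
        intro y hy
        rw [Finset.mem_erase, SimpleGraph.mem_neighborFinset] at hy
        obtain ⟨hyx, hvy⟩ := hy
        rw [common_eq G hvx hvy (fun h => hyx (h.symm)), Finset.sum_singleton,
          hdegE, hdegE]
        show dq G v * _ = _
        ring
      rw [Finset.sum_congr rfl hin, Finset.sum_erase_eq_sub hx, sum_lin]
      ring
    rw [Finset.sum_congr rfl fun v _ => h2 v]
    rw [hA4, hA3, hA2, hB2, hB1]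
    simp only [Finset.mul_sum, ← Finset.sum_add_distrib, ← Finset.sum_sub_distrib]
    exact Finset.sum_congr rfl fun v _ => by ring
  -- gamma
  have HG : (gammaI G : ℚ) = -A3 - B1 + DT + DU := by
    have h0 : (gammaI G : ℚ) = ∑ v : V, ∑ e ∈ G.edgeFinset,
        (if v ∉ e ∧ ∃ w ∈ e, G.Adj v w then dq G v * (degSum G e : ℚ) else 0) := by
      rw [gammaI]
      push_cast
      refine Finset.sum_congr rfl fun v _ => Finset.sum_congr rfl fun e _ => ?_
      split_ifs
      · rfl
      · rfl
    rw [h0]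
    have h1 : ∀ v : V, ∑ e ∈ G.edgeFinset,
          (if v ∉ e ∧ ∃ w ∈ e, G.Adj v w then dq G v * (degSum G e : ℚ) else 0)
        = (-(dq G v) ^ 2) * dq G v + (-(dq G v)) * Sq G v + dq G v * Tq G v
          + dq G v * Uq G v := by
      intro v
      rw [gamma_inner G htf v, ← inner_eval]
      refine Finset.sum_congr rfl fun x hx => ?_
      have hvx : G.Adj v x := (SimpleGraph.mem_neighborFinset _ _ _).mp hx
      have hxv : v ∈ G.neighborFinset x := (SimpleGraph.mem_neighborFinset _ _ _).mpr hvx.symm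
      rw [Finset.sum_erase_eq_sub hxv]
      have hy : ∑ y ∈ G.neighborFinset x, dq G v * (dq G x + dq G y)
          = dq G x * (dq G v * dq G x) + dq G v * Sq G x := by
        rw [← sum_lin]
        exact Finset.sum_congr rfl fun y _ => by ring
      rw [hy]
      ring
    rw [Finset.sum_congr rfl fun v _ => h1 v]
    rw [hA3, hB1, hDT, hDU]
    simp only [Finset.mul_sum, ← Finset.sum_add_distrib, ← Finset.sum_sub_distrib,
      ← Finset.sum_neg_distrib]
    exact Finset.sum_congr rfl fun v _ => by ring
  linarith [HG, HEM2, HB, HEM1, HF, HM1, Hm, SW1, SW2, SW3, SW4]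

end PaperMatching
end

section
/- For any simple graph G with m edges and girth greater than 3, the number of 3-matchings equals p(G,3) = m³/6 + m²/2 + 2m/3 − (m/2)M₁(G) − M₁(G) + F(G)/3 + M₂(G). -/
open Finset

namespace PaperMatching

open scoped Classical

variable {V : Type*}

section Aux

variable [Fintype V] (G : SimpleGraph V)

/-- Intersection indicator of two edges, as a rational number. -/
noncomputable def ii (e f : Sym2 V) : ℚ := if ∃ v : V, v ∈ e ∧ v ∈ f then 1 else 0

lemma ii_symm (e f : Sym2 V) : ii e f = ii f e := by
  unfold ii
  congr 1
  simp only [eq_iff_iff]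
  constructor <;> rintro ⟨v, h1, h2⟩ <;> exact ⟨v, h2, h1⟩

lemma edge_rep {e : Sym2 V} (he : e ∈ G.edgeFinset) :
    ∃ u v : V, u ≠ v ∧ e = s(u, v) := by
  obtain ⟨u, v⟩ := e
  exact ⟨u, v, (SimpleGraph.mem_edgeFinset.mp he).ne, rfl⟩

lemma filter_mem_edge {u v : V} (hne : u ≠ v) :
    (univ.filter (· ∈ s(u, v)) : Finset V) = {u, v} := by
  ext w; simp [Sym2.mem_iff]

omit [Fintype V] in
lemma triangle_free {G : SimpleGraph V} (hg : (3 : ℕ∞) < G.egirth)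
    {a b c : V} (hab : G.Adj a b) (hbc : G.Adj b c) (hca : G.Adj c a) : False := by
  have hac : a ≠ c := fun h => by subst h; exact G.loopless.irrefl _ hca
  set w : G.Walk a a := SimpleGraph.Walk.cons hab (SimpleGraph.Walk.cons hbc
    (SimpleGraph.Walk.cons hca SimpleGraph.Walk.nil)) with hw
  have hcyc : w.IsCycle := by
    rw [SimpleGraph.Walk.isCycle_def]
    simp [hw, SimpleGraph.Walk.isTrail_def, Sym2.eq_iff]
    have h1 := hab.ne; have h2 := hbc.ne
    tauto
  have h4 : (4 : ℕ∞) ≤ G.egirth := Order.add_one_le_of_lt hg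
  have := SimpleGraph.le_egirth.mp h4 a w hcyc
  have hlen : w.length = 3 := by simp [hw]
  rw [hlen] at this
  exact absurd this (by norm_num)

lemma card_inc (v : V) : (G.edgeFinset.filter (v ∈ ·)).card = G.degree v := by
  rw [← SimpleGraph.incidenceFinset_eq_filter, SimpleGraph.card_incidenceFinset_eq_degree]

lemma sum_ii {e : Sym2 V} (he : e ∈ G.edgeFinset) :
    ∑ f ∈ G.edgeFinset, ii e f = (degSum G e : ℚ) - 1 := by
  obtain ⟨u, v, hne, rfl⟩ := edge_rep G he
  have h1 : ∀ f : Sym2 V, (∃ w : V, w ∈ s(u, v) ∧ w ∈ f) ↔ (u ∈ f ∨ v ∈ f) := by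
    intro f
    constructor
    · rintro ⟨w, hw, hwf⟩
      rw [Sym2.mem_iff] at hw
      rcases hw with rfl | rfl
      · exact Or.inl hwf
      · exact Or.inr hwf
    · rintro (h | h)
      · exact ⟨u, by simp, h⟩
      · exact ⟨v, by simp, h⟩
  have hs : ∑ f ∈ G.edgeFinset, ii (s(u, v)) f
      = ∑ f ∈ G.edgeFinset, (if u ∈ f ∨ v ∈ f then (1 : ℚ) else 0) := by
    apply Finset.sum_congr rfl
    intro f _
    simp only [ii, h1]
  rw [hs, Finset.sum_boole]
  have hunion : G.edgeFinset.filter (fun f => u ∈ f ∨ v ∈ f)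
      = G.edgeFinset.filter (u ∈ ·) ∪ G.edgeFinset.filter (v ∈ ·) := Finset.filter_or _ _ _
  have hinter : G.edgeFinset.filter (u ∈ ·) ∩ G.edgeFinset.filter (v ∈ ·) = {s(u, v)} := by
    rw [← Finset.filter_and]
    ext f
    simp only [Finset.mem_filter, Finset.mem_singleton, SimpleGraph.mem_edgeFinset]
    constructor
    · rintro ⟨hf, hu, hv⟩
      exact (Sym2.mem_and_mem_iff hne).mp ⟨hu, hv⟩
    · rintro rfl
      exact ⟨SimpleGraph.mem_edgeFinset.mp he, by simp, by simp⟩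
  have hcards := Finset.card_union_add_card_inter (G.edgeFinset.filter (u ∈ ·))
    (G.edgeFinset.filter (v ∈ ·))
  rw [hinter, card_inc, card_inc, Finset.card_singleton] at hcards
  rw [hunion]
  have h2 : ((G.edgeFinset.filter (u ∈ ·) ∪ G.edgeFinset.filter (v ∈ ·)).card : ℚ) + 1
      = (G.degree u : ℚ) + G.degree v := by exact_mod_cast congrArg (Nat.cast (R := ℚ)) hcards
  have h3 : (degSum G s(u, v) : ℚ) = (G.degree u : ℚ) + G.degree v := by
    simp [degSum]
  rw [h3]
  linarith

lemma sum_over_edges (f : V → ℚ) (g : Sym2 V → ℚ)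
    (h : ∀ u v : V, u ≠ v → s(u, v) ∈ G.edgeFinset → g s(u, v) = f u + f v) :
    ∑ e ∈ G.edgeFinset, g e = ∑ v : V, f v * G.degree v := by
  have step1 : ∑ e ∈ G.edgeFinset, g e
      = ∑ e ∈ G.edgeFinset, ∑ v ∈ univ.filter (· ∈ e), f v := by
    apply Finset.sum_congr rfl
    intro e he
    obtain ⟨u, v, hne, rfl⟩ := edge_rep G he
    rw [h u v hne he, filter_mem_edge hne, Finset.sum_pair hne]
  rw [step1]
  have step2 : ∀ e ∈ G.edgeFinset, ∑ v ∈ univ.filter (· ∈ e), f v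
      = ∑ v : V, if v ∈ e then f v else 0 := by
    intro e _
    rw [Finset.sum_filter]
  rw [Finset.sum_congr rfl step2, Finset.sum_comm]
  apply Finset.sum_congr rfl
  intro v _
  rw [← Finset.sum_filter, Finset.sum_const, card_inc]
  simp [mul_comm]

lemma sum_degSum : ∑ e ∈ G.edgeFinset, (degSum G e : ℚ) = (M1 G : ℚ) := by
  rw [sum_over_edges G (fun v => (G.degree v : ℚ)) _ ?_]
  · simp [M1, M1gen, pow_two]
  · intro u v hne _
    simp [degSum]

lemma sum_degSq : ∑ e ∈ G.edgeFinset,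
    Sym2.lift ⟨fun u v => (G.degree u : ℚ) ^ 2 + (G.degree v : ℚ) ^ 2,
      fun u v => by ring⟩ e = (Fidx G : ℚ) := by
  rw [sum_over_edges G (fun v => (G.degree v : ℚ) ^ 2) _ ?_]
  · rw [Fidx, M1gen]
    push_cast
    apply Finset.sum_congr rfl
    intro v _
    ring
  · intro u v hne _
    simp

lemma M2_cast : (M2 G : ℚ) = ∑ e ∈ G.edgeFinset,
    Sym2.lift ⟨fun u v => (G.degree u : ℚ) * (G.degree v : ℚ), fun u v => by ring⟩ e := by
  rw [M2]
  push_cast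
  apply Finset.sum_congr rfl
  intro e he
  obtain ⟨u, v, hne, rfl⟩ := edge_rep G he
  simp

lemma sum_degSum_sq : ∑ e ∈ G.edgeFinset, (degSum G e : ℚ) ^ 2
    = (Fidx G : ℚ) + 2 * (M2 G : ℚ) := by
  have key : ∀ e ∈ G.edgeFinset, (degSum G e : ℚ) ^ 2
      = Sym2.lift ⟨fun u v => (G.degree u : ℚ) ^ 2 + (G.degree v : ℚ) ^ 2,
          fun u v => by ring⟩ e
        + 2 * Sym2.lift ⟨fun u v => (G.degree u : ℚ) * (G.degree v : ℚ),
          fun u v => by ring⟩ e := by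
    intro e he
    obtain ⟨u, v, hne, rfl⟩ := edge_rep G he
    simp [degSum]
    push_cast
    ring
  rw [Finset.sum_congr rfl key, Finset.sum_add_distrib, sum_degSq, ← Finset.mul_sum, ← M2_cast]

lemma sum_cube {β : Type*} (s : Finset β) (f : β → ℚ) :
    (∑ x ∈ s, f x) ^ 3 = ∑ a ∈ s, ∑ b ∈ s, ∑ c ∈ s, f a * f b * f c := by
  rw [pow_succ, pow_two, Finset.sum_mul_sum, Finset.sum_mul]
  apply Finset.sum_congr rfl
  intro a _
  rw [Finset.sum_mul]
  apply Finset.sum_congr rfl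
  intro b _
  rw [Finset.mul_sum]

lemma F_eq_triple : (Fidx G : ℚ) = ∑ e ∈ G.edgeFinset, ∑ f ∈ G.edgeFinset,
    ∑ g ∈ G.edgeFinset,
      ((univ.filter (fun v : V => v ∈ e ∧ v ∈ f ∧ v ∈ g)).card : ℚ) := by
  have hdeg : ∀ v : V, (G.degree v : ℚ) = ∑ e ∈ G.edgeFinset,
      (if v ∈ e then (1 : ℚ) else 0) := by
    intro v
    rw [Finset.sum_boole, card_inc]
  have hF : (Fidx G : ℚ) = ∑ v : V, (∑ e ∈ G.edgeFinset,
      (if v ∈ e then (1 : ℚ) else 0)) ^ 3 := by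
    rw [Fidx, M1gen]
    push_cast
    exact Finset.sum_congr rfl fun v _ => by rw [← hdeg]
  rw [hF]
  have hcube : ∀ v : V, (∑ e ∈ G.edgeFinset, (if v ∈ e then (1 : ℚ) else 0)) ^ 3
      = ∑ e ∈ G.edgeFinset, ∑ f ∈ G.edgeFinset, ∑ g ∈ G.edgeFinset,
          (if v ∈ e then (1 : ℚ) else 0) * (if v ∈ f then (1 : ℚ) else 0)
            * (if v ∈ g then (1 : ℚ) else 0) := fun v => sum_cube _ _
  rw [Finset.sum_congr rfl fun v _ => hcube v]
  rw [Finset.sum_comm]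
  apply Finset.sum_congr rfl
  intro e _
  rw [Finset.sum_comm]
  apply Finset.sum_congr rfl
  intro f _
  rw [Finset.sum_comm]
  apply Finset.sum_congr rfl
  intro g _
  rw [← Finset.sum_boole]
  apply Finset.sum_congr rfl
  intro v _
  by_cases h1 : v ∈ e <;> by_cases h2 : v ∈ f <;> by_cases h3 : v ∈ g <;>
    simp [h1, h2, h3]

lemma kappa_eval {e f g : Sym2 V} (he : e ∈ G.edgeFinset) (hf : f ∈ G.edgeFinset)
    (hg : g ∈ G.edgeFinset) :
    ((univ.filter (fun v : V => v ∈ e ∧ v ∈ f ∧ v ∈ g)).card : ℚ)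
      = (if e = f ∧ f = g then 1 else 0)
        + (if ∃ v : V, v ∈ e ∧ v ∈ f ∧ v ∈ g then 1 else 0) := by
  by_cases hall : e = f ∧ f = g
  · obtain ⟨rfl, rfl⟩ : e = f ∧ f = g := hall
    obtain ⟨u, v⟩ := e
    have hne : u ≠ v := (SimpleGraph.mem_edgeFinset.mp he).ne
    have hfilter : (univ.filter (fun w : V => w ∈ s(u,v) ∧ w ∈ s(u,v) ∧ w ∈ s(u,v)))
        = ({u, v} : Finset V) := by
      ext w; simp [Sym2.mem_iff]
    rw [hfilter, Finset.card_pair hne]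
    rw [if_pos ⟨rfl, rfl⟩, if_pos ⟨u, by simp, by simp, by simp⟩]
    norm_num
  · have hle : (univ.filter (fun v : V => v ∈ e ∧ v ∈ f ∧ v ∈ g)).card ≤ 1 := by
      by_contra hlt
      push_neg at hlt
      obtain ⟨a, ha, b, hb, hab⟩ := Finset.one_lt_card.mp hlt
      simp only [Finset.mem_filter, Finset.mem_univ, true_and] at ha hb
      have he' : e = s(a, b) := (Sym2.mem_and_mem_iff hab).mp ⟨ha.1, hb.1⟩
      have hf' : f = s(a, b) := (Sym2.mem_and_mem_iff hab).mp ⟨ha.2.1, hb.2.1⟩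
      have hg' : g = s(a, b) := (Sym2.mem_and_mem_iff hab).mp ⟨ha.2.2, hb.2.2⟩
      exact hall ⟨he'.trans hf'.symm, hf'.trans hg'.symm⟩
    rw [if_neg hall]
    by_cases hex : ∃ v : V, v ∈ e ∧ v ∈ f ∧ v ∈ g
    · obtain ⟨v, hv⟩ := hex
      have hmem : v ∈ univ.filter (fun v : V => v ∈ e ∧ v ∈ f ∧ v ∈ g) := by
        simp [hv]
      have hge : 1 ≤ (univ.filter (fun v : V => v ∈ e ∧ v ∈ f ∧ v ∈ g)).card :=
        Finset.card_pos.mpr ⟨v, hmem⟩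
      have hone : (univ.filter (fun v : V => v ∈ e ∧ v ∈ f ∧ v ∈ g)).card = 1 :=
        le_antisymm hle hge
      rw [hone, if_pos ⟨v, hv⟩]
      norm_num
    · have hempty : (univ.filter (fun v : V => v ∈ e ∧ v ∈ f ∧ v ∈ g)) = ∅ := by
        ext v
        simp only [Finset.mem_filter, Finset.mem_univ, true_and, Finset.notMem_empty, iff_false]
        intro hv
        exact hex ⟨v, hv⟩
      rw [hempty, if_neg hex]
      norm_num

lemma common_of_pairwise (hg3 : (3 : ℕ∞) < G.egirth) {e f g : Sym2 V}
    (he : e ∈ G.edgeFinset) (hf : f ∈ G.edgeFinset) (hgg : g ∈ G.edgeFinset)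
    (hef : ∃ v : V, v ∈ e ∧ v ∈ f) (heg : ∃ v : V, v ∈ e ∧ v ∈ g)
    (hfg : ∃ v : V, v ∈ f ∧ v ∈ g) :
    ∃ v : V, v ∈ e ∧ v ∈ f ∧ v ∈ g := by
  obtain ⟨x, hxe, hxf⟩ := hef
  obtain ⟨y, hye, hyg⟩ := heg
  obtain ⟨z, hzf, hzg⟩ := hfg
  by_cases hxy : x = y
  · exact ⟨x, hxe, hxf, hxy ▸ hyg⟩
  by_cases hzx : z = x
  · exact ⟨x, hxe, hxf, hzx ▸ hzg⟩
  by_cases hzy : z = y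
  · exact ⟨y, hye, hzy ▸ hzf, hyg⟩
  exfalso
  have hexy : e = s(x, y) := (Sym2.mem_and_mem_iff hxy).mp ⟨hxe, hye⟩
  have hfxz : f = s(x, z) := (Sym2.mem_and_mem_iff (fun h => hzx h.symm)).mp ⟨hxf, hzf⟩
  have hgyz : g = s(y, z) := (Sym2.mem_and_mem_iff (fun h => hzy h.symm)).mp ⟨hyg, hzg⟩
  have haxy : G.Adj x y := by
    have h := SimpleGraph.mem_edgeFinset.mp he
    rw [hexy, SimpleGraph.mem_edgeSet] at h
    exact h
  have haxz : G.Adj x z := by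
    have h := SimpleGraph.mem_edgeFinset.mp hf
    rw [hfxz, SimpleGraph.mem_edgeSet] at h
    exact h
  have hayz : G.Adj y z := by
    have h := SimpleGraph.mem_edgeFinset.mp hgg
    rw [hgyz, SimpleGraph.mem_edgeSet] at h
    exact h
  exact triangle_free hg3 haxy hayz haxz.symm

lemma ii_prod (hg3 : (3 : ℕ∞) < G.egirth) {e f g : Sym2 V}
    (he : e ∈ G.edgeFinset) (hf : f ∈ G.edgeFinset) (hgg : g ∈ G.edgeFinset) :
    ii e f * ii e g * ii f g = if ∃ v : V, v ∈ e ∧ v ∈ f ∧ v ∈ g then 1 else 0 := by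
  by_cases hc : ∃ v : V, v ∈ e ∧ v ∈ f ∧ v ∈ g
  · obtain ⟨v, h1, h2, h3⟩ := hc
    rw [if_pos ⟨v, h1, h2, h3⟩]
    unfold ii
    rw [if_pos ⟨v, h1, h2⟩, if_pos ⟨v, h1, h3⟩, if_pos ⟨v, h2, h3⟩]
    norm_num
  · rw [if_neg hc]
    by_cases h1 : ∃ v : V, v ∈ e ∧ v ∈ f
    · by_cases h2 : ∃ v : V, v ∈ e ∧ v ∈ g
      · by_cases h3 : ∃ v : V, v ∈ f ∧ v ∈ g
        · exact absurd (common_of_pairwise G hg3 he hf hgg h1 h2 h3) hc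
        · simp [ii, h3]
      · simp [ii, h2]
    · simp [ii, h1]

lemma sum_alleq : ∑ e ∈ G.edgeFinset, ∑ f ∈ G.edgeFinset, ∑ g ∈ G.edgeFinset,
    (if e = f ∧ f = g then (1 : ℚ) else 0) = (G.edgeFinset.card : ℚ) := by
  have h1 : ∀ e ∈ G.edgeFinset, ∑ f ∈ G.edgeFinset, ∑ g ∈ G.edgeFinset,
      (if e = f ∧ f = g then (1 : ℚ) else 0) = 1 := by
    intro e he
    have h2 : ∀ f ∈ G.edgeFinset, ∑ g ∈ G.edgeFinset,
        (if e = f ∧ f = g then (1 : ℚ) else 0) = if e = f then 1 else 0 := by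
      intro f hfm
      by_cases hef : e = f
      · subst hef
        simp only [true_and, if_pos rfl]
        rw [Finset.sum_ite_eq G.edgeFinset e (fun _ => (1 : ℚ)), if_pos he]
        simp
      · simp [hef]
    rw [Finset.sum_congr rfl h2, Finset.sum_ite_eq G.edgeFinset e (fun _ => (1 : ℚ)), if_pos he]
  rw [Finset.sum_congr rfl h1, Finset.sum_const]
  simp

lemma sum_triple_ii (hg3 : (3 : ℕ∞) < G.egirth) :
    ∑ e ∈ G.edgeFinset, ∑ f ∈ G.edgeFinset, ∑ g ∈ G.edgeFinset,
      ii e f * ii e g * ii f g = (Fidx G : ℚ) - G.edgeFinset.card := by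
  have h1 : (Fidx G : ℚ) = ∑ e ∈ G.edgeFinset, ∑ f ∈ G.edgeFinset, ∑ g ∈ G.edgeFinset,
      ((if e = f ∧ f = g then (1 : ℚ) else 0) + ii e f * ii e g * ii f g) := by
    rw [F_eq_triple]
    apply Finset.sum_congr rfl
    intro e he
    apply Finset.sum_congr rfl
    intro f hf
    apply Finset.sum_congr rfl
    intro g hgm
    rw [kappa_eval G he hf hgm, ii_prod G hg3 he hf hgm]
  rw [h1]
  simp only [Finset.sum_add_distrib]
  rw [sum_alleq]
  ring

lemma sum_Pval : ∑ e ∈ G.edgeFinset, ∑ f ∈ G.edgeFinset, ii e f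
    = (M1 G : ℚ) - G.edgeFinset.card := by
  rw [Finset.sum_congr rfl (fun e he => sum_ii G he), Finset.sum_sub_distrib, sum_degSum]
  simp

lemma sum_N2val : ∑ e ∈ G.edgeFinset, ((degSum G e : ℚ) - 1) ^ 2
    = (Fidx G : ℚ) + 2 * (M2 G : ℚ) - 2 * (M1 G : ℚ) + G.edgeFinset.card := by
  have h1 : ∀ e ∈ G.edgeFinset, ((degSum G e : ℚ) - 1) ^ 2
      = (degSum G e : ℚ) ^ 2 - 2 * (degSum G e : ℚ) + 1 := fun e _ => by ring
  rw [Finset.sum_congr rfl h1]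
  rw [Finset.sum_add_distrib, Finset.sum_sub_distrib, ← Finset.mul_sum, sum_degSum_sq,
    sum_degSum, Finset.sum_const, nsmul_eq_mul, mul_one]

lemma S_val (hg3 : (3 : ℕ∞) < G.egirth) :
    ∑ e ∈ G.edgeFinset, ∑ f ∈ G.edgeFinset, ∑ g ∈ G.edgeFinset,
        (1 - ii e f) * (1 - ii e g) * (1 - ii f g)
      = (G.edgeFinset.card : ℚ) ^ 3
        - 3 * (G.edgeFinset.card : ℚ) * ((M1 G : ℚ) - G.edgeFinset.card)
        + 3 * ((Fidx G : ℚ) + 2 * (M2 G : ℚ) - 2 * (M1 G : ℚ) + G.edgeFinset.card)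
        - ((Fidx G : ℚ) - G.edgeFinset.card) := by
  have expand : ∀ e f g : Sym2 V, (1 - ii e f) * (1 - ii e g) * (1 - ii f g)
      = 1 - ii e f - ii e g - ii f g + ii e f * ii e g + ii e f * ii f g
        + ii e g * ii f g - ii e f * ii e g * ii f g := fun e f g => by ring
  simp only [expand]
  simp only [Finset.sum_add_distrib, Finset.sum_sub_distrib]
  have H1 : ∑ e ∈ G.edgeFinset, ∑ f ∈ G.edgeFinset, ∑ g ∈ G.edgeFinset, (1 : ℚ)
      = (G.edgeFinset.card : ℚ) ^ 3 := by
    simp only [Finset.sum_const, nsmul_eq_mul, mul_one]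
    ring
  have H2 : ∑ e ∈ G.edgeFinset, ∑ f ∈ G.edgeFinset, ∑ g ∈ G.edgeFinset, ii e f
      = (G.edgeFinset.card : ℚ) * ((M1 G : ℚ) - G.edgeFinset.card) := by
    simp only [Finset.sum_const, nsmul_eq_mul]
    simp only [← Finset.mul_sum]
    rw [sum_Pval]
  have H3 : ∑ e ∈ G.edgeFinset, ∑ f ∈ G.edgeFinset, ∑ g ∈ G.edgeFinset, ii e g
      = (G.edgeFinset.card : ℚ) * ((M1 G : ℚ) - G.edgeFinset.card) := by
    have h : ∀ e ∈ G.edgeFinset, ∑ f ∈ G.edgeFinset, ∑ g ∈ G.edgeFinset, ii e g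
        = (G.edgeFinset.card : ℚ) * ∑ g ∈ G.edgeFinset, ii e g := by
      intro e _
      rw [Finset.sum_const, nsmul_eq_mul]
    rw [Finset.sum_congr rfl h]
    simp only [← Finset.mul_sum]
    rw [sum_Pval]
  have H4 : ∑ e ∈ G.edgeFinset, ∑ f ∈ G.edgeFinset, ∑ g ∈ G.edgeFinset, ii f g
      = (G.edgeFinset.card : ℚ) * ((M1 G : ℚ) - G.edgeFinset.card) := by
    rw [Finset.sum_const, nsmul_eq_mul, sum_Pval]
  have Hsq : ∀ e ∈ G.edgeFinset, (∑ f ∈ G.edgeFinset, ii e f) ^ 2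
      = ((degSum G e : ℚ) - 1) ^ 2 := fun e he => by rw [sum_ii G he]
  have Hrow : ∀ f ∈ G.edgeFinset, ∑ e ∈ G.edgeFinset, ii e f = (degSum G f : ℚ) - 1 := by
    intro f hf
    rw [Finset.sum_congr rfl (fun e _ => ii_symm e f), sum_ii G hf]
  have H5 : ∑ e ∈ G.edgeFinset, ∑ f ∈ G.edgeFinset, ∑ g ∈ G.edgeFinset, ii e f * ii e g
      = (Fidx G : ℚ) + 2 * (M2 G : ℚ) - 2 * (M1 G : ℚ) + G.edgeFinset.card := by
    rw [← sum_N2val G]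
    apply Finset.sum_congr rfl
    intro e he
    rw [← Hsq e he, pow_two, Finset.sum_mul_sum]
  have H6 : ∑ e ∈ G.edgeFinset, ∑ f ∈ G.edgeFinset, ∑ g ∈ G.edgeFinset, ii e f * ii f g
      = (Fidx G : ℚ) + 2 * (M2 G : ℚ) - 2 * (M1 G : ℚ) + G.edgeFinset.card := by
    rw [Finset.sum_comm]
    rw [← sum_N2val G]
    apply Finset.sum_congr rfl
    intro f hf
    have : ∑ e ∈ G.edgeFinset, ∑ g ∈ G.edgeFinset, ii e f * ii f g
        = (∑ e ∈ G.edgeFinset, ii e f) * (∑ g ∈ G.edgeFinset, ii f g) := by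
      rw [Finset.sum_mul_sum]
    rw [this, Hrow f hf, sum_ii G hf]
    ring
  have H7 : ∑ e ∈ G.edgeFinset, ∑ f ∈ G.edgeFinset, ∑ g ∈ G.edgeFinset, ii e g * ii f g
      = (Fidx G : ℚ) + 2 * (M2 G : ℚ) - 2 * (M1 G : ℚ) + G.edgeFinset.card := by
    have hswap : ∀ e ∈ G.edgeFinset, ∑ f ∈ G.edgeFinset, ∑ g ∈ G.edgeFinset, ii e g * ii f g
        = ∑ g ∈ G.edgeFinset, ii e g * ((degSum G g : ℚ) - 1) := by
      intro e _
      rw [Finset.sum_comm]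
      apply Finset.sum_congr rfl
      intro g hgm
      rw [← Finset.mul_sum, Hrow g hgm]
    rw [Finset.sum_congr rfl hswap, Finset.sum_comm, ← sum_N2val G]
    apply Finset.sum_congr rfl
    intro g hgm
    rw [← Finset.sum_mul, Hrow g hgm]
    ring
  rw [H1, H2, H3, H4, H5, H6, H7, sum_triple_ii G hg3]
  ring

/-- ordered triples of pairwise disjoint edges -/
noncomputable def OT : Finset (Sym2 V × Sym2 V × Sym2 V) :=
  (G.edgeFinset ×ˢ G.edgeFinset ×ˢ G.edgeFinset).filter
    (fun p => (¬∃ v : V, v ∈ p.1 ∧ v ∈ p.2.1) ∧ (¬∃ v : V, v ∈ p.1 ∧ v ∈ p.2.2)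
      ∧ (¬∃ v : V, v ∈ p.2.1 ∧ v ∈ p.2.2))

lemma edge_nonempty {e : Sym2 V} (he : e ∈ G.edgeFinset) : ∃ v : V, v ∈ e := by
  obtain ⟨u, v⟩ := e
  exact ⟨u, by simp⟩

set_option maxHeartbeats 2000000 in
lemma OT_card : (OT G).card = 6 * pM G 3 := by
  rw [pM]
  rw [Finset.card_eq_sum_card_fiberwise
    (f := fun p : Sym2 V × Sym2 V × Sym2 V => ({p.1, p.2.1, p.2.2} : Finset (Sym2 V)))
    (t := (G.edgeFinset.powersetCard 3).filter
      (fun s => ∀ e ∈ s, ∀ f ∈ s, e ≠ f → ∀ v : V, ¬(v ∈ e ∧ v ∈ f))) ?_]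
  · rw [Finset.sum_congr rfl (g := fun _ => 6) ?_, Finset.sum_const, smul_eq_mul, mul_comm]
    intro s hs
    rw [Finset.mem_filter, Finset.mem_powersetCard] at hs
    obtain ⟨⟨hsub, hcard⟩, hmatch⟩ := hs
    obtain ⟨a, b, c, hab, hac, hbc, rfl⟩ := Finset.card_eq_three.mp hcard
    have haE : a ∈ G.edgeFinset := hsub (by simp)
    have hbE : b ∈ G.edgeFinset := hsub (by simp)
    have hcE : c ∈ G.edgeFinset := hsub (by simp)
    have hdab : ∀ v : V, ¬(v ∈ a ∧ v ∈ b) := hmatch a (by simp) b (by simp) hab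
    have hdac : ∀ v : V, ¬(v ∈ a ∧ v ∈ c) := hmatch a (by simp) c (by simp) hac
    have hdbc : ∀ v : V, ¬(v ∈ b ∧ v ∈ c) := hmatch b (by simp) c (by simp) hbc
    have hdba : ∀ v : V, ¬(v ∈ b ∧ v ∈ a) := fun v hv => hdab v ⟨hv.2, hv.1⟩
    have hdca : ∀ v : V, ¬(v ∈ c ∧ v ∈ a) := fun v hv => hdac v ⟨hv.2, hv.1⟩
    have hdcb : ∀ v : V, ¬(v ∈ c ∧ v ∈ b) := fun v hv => hdbc v ⟨hv.2, hv.1⟩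
    have hfib : (OT G).filter
        (fun p : Sym2 V × Sym2 V × Sym2 V => ({p.1, p.2.1, p.2.2} : Finset (Sym2 V)) = {a, b, c})
        = ({(a, b, c), (a, c, b), (b, a, c), (b, c, a), (c, a, b), (c, b, a)} :
            Finset (Sym2 V × Sym2 V × Sym2 V)) := by
      ext ⟨x, y, z⟩
      simp only [Finset.mem_filter, OT, Finset.mem_insert, Finset.mem_singleton,
        Finset.mem_product, Prod.mk.injEq]
      constructor
      · rintro ⟨⟨⟨hxE, hyE, hzE⟩, hd1, hd2, hd3⟩, hset⟩
        have hxy : x ≠ y := by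
          rintro rfl
          obtain ⟨v, hv⟩ := edge_nonempty G hxE
          exact hd1 ⟨v, hv, hv⟩
        have hxz : x ≠ z := by
          rintro rfl
          obtain ⟨v, hv⟩ := edge_nonempty G hxE
          exact hd2 ⟨v, hv, hv⟩
        have hyz : y ≠ z := by
          rintro rfl
          obtain ⟨v, hv⟩ := edge_nonempty G hyE
          exact hd3 ⟨v, hv, hv⟩
        have hx : x ∈ ({a, b, c} : Finset (Sym2 V)) := by rw [← hset]; simp
        have hy : y ∈ ({a, b, c} : Finset (Sym2 V)) := by rw [← hset]; simp
        have hz : z ∈ ({a, b, c} : Finset (Sym2 V)) := by rw [← hset]; simp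
        simp only [Finset.mem_insert, Finset.mem_singleton] at hx hy hz
        rcases hx with rfl | rfl | rfl <;> rcases hy with rfl | rfl | rfl <;>
          rcases hz with rfl | rfl | rfl <;> simp_all
      · rintro (⟨rfl, rfl, rfl⟩ | ⟨rfl, rfl, rfl⟩ | ⟨rfl, rfl, rfl⟩ | ⟨rfl, rfl, rfl⟩ |
          ⟨rfl, rfl, rfl⟩ | ⟨rfl, rfl, rfl⟩)
        · exact ⟨⟨⟨haE, hbE, hcE⟩, fun ⟨v, hv⟩ => hdab v hv, fun ⟨v, hv⟩ => hdac v hv,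
            fun ⟨v, hv⟩ => hdbc v hv⟩, by ext w; simp; try tauto⟩
        · exact ⟨⟨⟨haE, hcE, hbE⟩, fun ⟨v, hv⟩ => hdac v hv, fun ⟨v, hv⟩ => hdab v hv,
            fun ⟨v, hv⟩ => hdcb v hv⟩, by ext w; simp; try tauto⟩
        · exact ⟨⟨⟨hbE, haE, hcE⟩, fun ⟨v, hv⟩ => hdba v hv, fun ⟨v, hv⟩ => hdbc v hv,
            fun ⟨v, hv⟩ => hdac v hv⟩, by ext w; simp; try tauto⟩
        · exact ⟨⟨⟨hbE, hcE, haE⟩, fun ⟨v, hv⟩ => hdbc v hv, fun ⟨v, hv⟩ => hdba v hv,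
            fun ⟨v, hv⟩ => hdca v hv⟩, by ext w; simp; try tauto⟩
        · exact ⟨⟨⟨hcE, haE, hbE⟩, fun ⟨v, hv⟩ => hdca v hv, fun ⟨v, hv⟩ => hdcb v hv,
            fun ⟨v, hv⟩ => hdab v hv⟩, by ext w; simp; try tauto⟩
        · exact ⟨⟨⟨hcE, hbE, haE⟩, fun ⟨v, hv⟩ => hdcb v hv, fun ⟨v, hv⟩ => hdca v hv,
            fun ⟨v, hv⟩ => hdba v hv⟩, by ext w; simp; try tauto⟩
    have hc6 : ((OT G).filter
        (fun p : Sym2 V × Sym2 V × Sym2 V =>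
          ({p.1, p.2.1, p.2.2} : Finset (Sym2 V)) = {a, b, c})).card = 6 := by
      rw [hfib,
        Finset.card_insert_of_notMem (by simp [hab, hac, hbc, hab.symm, hac.symm, hbc.symm]),
        Finset.card_insert_of_notMem (by simp [hab, hac, hbc, hab.symm, hac.symm, hbc.symm]),
        Finset.card_insert_of_notMem (by simp [hab, hac, hbc, hab.symm, hac.symm, hbc.symm]),
        Finset.card_insert_of_notMem (by simp [hab, hac, hbc, hab.symm, hac.symm, hbc.symm]),
        Finset.card_insert_of_notMem (by simp [hab, hac, hbc, hab.symm, hac.symm, hbc.symm]),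
        Finset.card_singleton]
    exact hc6
  · rintro ⟨x, y, z⟩ hp
    rw [Finset.mem_coe, OT, Finset.mem_filter, Finset.mem_product, Finset.mem_product] at hp
    obtain ⟨⟨hxE, hyE, hzE⟩, hd1, hd2, hd3⟩ := hp
    have hxy : x ≠ y := by
      rintro rfl
      obtain ⟨v, hv⟩ := edge_nonempty G hxE
      exact hd1 ⟨v, hv, hv⟩
    have hxz : x ≠ z := by
      rintro rfl
      obtain ⟨v, hv⟩ := edge_nonempty G hxE
      exact hd2 ⟨v, hv, hv⟩
    have hyz : y ≠ z := by
      rintro rfl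
      obtain ⟨v, hv⟩ := edge_nonempty G hyE
      exact hd3 ⟨v, hv, hv⟩
    rw [Finset.mem_coe, Finset.mem_filter, Finset.mem_powersetCard]
    refine ⟨⟨?_, ?_⟩, ?_⟩
    · intro e hee
      simp only [Finset.mem_insert, Finset.mem_singleton] at hee
      rcases hee with rfl | rfl | rfl <;> assumption
    · rw [Finset.card_insert_of_notMem (by simp [hxy, hxz]),
        Finset.card_insert_of_notMem (by simp [hyz]), Finset.card_singleton]
    · intro e hee f hff hef v hv
      simp only [Finset.mem_insert, Finset.mem_singleton] at hee hff
      push_neg at hd1 hd2 hd3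
      rcases hee with rfl | rfl | rfl <;> rcases hff with rfl | rfl | rfl <;>
        first
          | exact hef rfl
          | exact hd1 v hv.1 hv.2
          | exact hd2 v hv.1 hv.2
          | exact hd3 v hv.1 hv.2
          | exact hd1 v hv.2 hv.1
          | exact hd2 v hv.2 hv.1
          | exact hd3 v hv.2 hv.1


lemma S_to_card : ∑ e ∈ G.edgeFinset, ∑ f ∈ G.edgeFinset, ∑ g ∈ G.edgeFinset,
    (1 - ii e f) * (1 - ii e g) * (1 - ii f g) = ((OT G).card : ℚ) := by
  rw [OT, Finset.natCast_card_filter, Finset.sum_product]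
  apply Finset.sum_congr rfl
  intro e _
  rw [Finset.sum_product]
  apply Finset.sum_congr rfl
  intro f _
  apply Finset.sum_congr rfl
  intro g _
  by_cases h1 : ∃ v : V, v ∈ e ∧ v ∈ f <;> by_cases h2 : ∃ v : V, v ∈ e ∧ v ∈ g <;>
    by_cases h3 : ∃ v : V, v ∈ f ∧ v ∈ g <;> simp [ii, h1, h2, h3]

end Aux

theorem number_of_three_matchings (V : Type*) [Fintype V] (G : SimpleGraph V)
    (hg : (3 : ℕ∞) < G.egirth) (m : ℚ) (hm : m = G.edgeFinset.card) :
    (pM G 3 : ℚ) =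
      m ^ 3 / 6 + m ^ 2 / 2 + 2 * m / 3 - (m / 2) * (M1 G : ℚ) - (M1 G : ℚ)
        + (Fidx G : ℚ) / 3 + (M2 G : ℚ) := by
  have h1 : ((OT G).card : ℚ) = 6 * (pM G 3 : ℚ) := by
    rw [OT_card]; push_cast; ring
  have key : (6 : ℚ) * (pM G 3 : ℚ)
      = (G.edgeFinset.card : ℚ) ^ 3
        - 3 * (G.edgeFinset.card : ℚ) * ((M1 G : ℚ) - G.edgeFinset.card)
        + 3 * ((Fidx G : ℚ) + 2 * (M2 G : ℚ) - 2 * (M1 G : ℚ) + G.edgeFinset.card)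
        - ((Fidx G : ℚ) - G.edgeFinset.card) := by
    rw [← h1, ← S_to_card G, S_val G hg]
  subst hm
  linear_combination key / 6

end PaperMatching
end
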